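/- arXiv:2507.06953 — 9 statements merged into one kernel-verified Lean document; each statement's English description precedes it below -/
import Mathlib

section
/- Let G be a finitely generated nilpotent group. If the commutator subgroup [G,G] is cyclic and contained in the center Z(G), then no positive cone of G is condensed for the conjugation action; that is, for every positive cone P of G there exists a finite subset F ⊆ P such that every g ∈ G with F ⊆ g⁻¹Pg satisfies g⁻¹Pg = P. (Equivalently, the conjugacy orbit equivalence relation E_lo(G) on the space of left orders of G is smooth.) -/
/-- A positive cone of a group `G`: a subsemigroup `P` such that `G` is the disjoint
union of `P`, `P⁻¹` and `{1}`. -/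
def IsPositiveCone {G : Type*} [Group G] (P : Set G) : Prop :=
  (∀ a ∈ P, ∀ b ∈ P, a * b ∈ P) ∧
  (∀ g : G, g ∈ P ∨ g⁻¹ ∈ P ∨ g = 1) ∧
  (∀ g ∈ P, g⁻¹ ∉ P) ∧
  (1 : G) ∉ P

/-- The conjugate `g⁻¹ P g` of a subset `P` of a group. -/
def conjCone {G : Type*} [Group G] (g : G) (P : Set G) : Set G :=
  (fun p => g⁻¹ * p * g) '' P

/-!
The commutator subgroup is generated by a central element `c`, which we may take in `P`, so
conjugation by any `g` moves each `x` inside its coset `x⟨c⟩`: `g x g⁻¹ = x c^e`. Cosets lying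
entirely in `P` or entirely outside it are therefore preserved by every conjugation. For `x` whose
coset is cut by `P`, let `x c^m` be the least element of the coset in `P`; if `g⁻¹ P g` contains
it and the analogous element for `x⁻¹`, then `e ≥ 0` and `-e ≥ 0`, so `g` commutes with `x`.
Since `G/[G, G]` is a finitely generated abelian group, hence noetherian, finitely many such `x`
generate all of them modulo the central subgroup `[G, G]`; their least elements form `F`.
-/

open Subgroup
open scoped commutatorElement

theorem CommGroup.exists_finite_subset_closure_eq {A : Type*} [CommGroup A] [Group.FG A]
    (S : Set A) : ∃ T ⊆ S, T.Finite ∧ closure T = closure S := by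
  have : Module.Finite ℤ (Additive A) := Module.Finite.iff_addGroup_fg.mpr inferInstance
  obtain ⟨T, hTS, hspan⟩ := (Submodule.fg_span_iff_fg_span_finset_subset
    (Additive.toMul ⁻¹' S)).1 (IsNoetherian.noetherian (R := ℤ) _)
  refine ⟨Additive.ofMul ⁻¹' T, hTS, T.finite_toSet.preimage Additive.ofMul.injective.injOn, ?_⟩
  apply Subgroup.toAddSubgroup.injective
  rw [toAddSubgroup_closure, toAddSubgroup_closure, ← Submodule.span_int_eq_addSubgroupClosure,
    ← Submodule.span_int_eq_addSubgroupClosure]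
  exact congrArg _ hspan.symm

theorem Group.exists_finite_subset_le_closure_sup_commutator {G : Type*} [Group G] [Group.FG G]
    (S : Set G) : ∃ T ⊆ S, T.Finite ∧ S ⊆ (closure T ⊔ commutator G : Subgroup G) := by
  have : Group.FG (Abelianization G) := QuotientGroup.fg _
  obtain ⟨T, hTS, hT, hcl⟩ := Set.exists_subset_image_finite_and.1
    (CommGroup.exists_finite_subset_closure_eq (Abelianization.of '' S))
  refine ⟨T, hTS, hT, fun x hx => ?_⟩
  rw [SetLike.mem_coe, ← Abelianization.ker_of, ← comap_map_eq, mem_comap, MonoidHom.map_closure,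
    hcl]
  exact subset_closure (Set.mem_image_of_mem _ hx)

section Cone

variable {G : Type*} [Group G] {P : Set G}

theorem mem_conjCone {g y : G} : y ∈ conjCone g P ↔ g * y * g⁻¹ ∈ P := by
  constructor
  · rintro ⟨p, hp, rfl⟩
    simpa [mul_assoc] using hp
  · exact fun h => ⟨g * y * g⁻¹, h, by group⟩

theorem conjCone_eq_self_iff {g : G} : conjCone g P = P ↔ ∀ y, g * y * g⁻¹ ∈ P ↔ y ∈ P := by
  simp only [Set.ext_iff, mem_conjCone]

theorem exists_conj_eq_mul_zpow {c : G} (hzp : commutator G = zpowers c)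
    (hcen : commutator G ≤ center G) (g x : G) : ∃ e : ℤ, g * x * g⁻¹ = x * c ^ e := by
  have hgx : ⁅g, x⁆ ∈ commutator G := commutator_mem_commutator (mem_top g) (mem_top x)
  obtain ⟨e, he⟩ := mem_zpowers_iff.1 (hzp ▸ hgx)
  refine ⟨e, ?_⟩
  rw [← MulAut.conj_apply, conj_eq_commutatorElement_mul, ← he,
    mem_center_iff.mp (hcen (he ▸ hgx)) x]

variable {c : G}

theorem IsPositiveCone.zpow_mem_iff (hP : IsPositiveCone P) (hc : c ∈ P) {n : ℤ} :
    c ^ n ∈ P ↔ 0 < n := by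
  have hpos : ∀ n : ℕ, c ^ (n + 1) ∈ P := fun n => by
    induction n with
    | zero => simpa using hc
    | succ k ih => rw [pow_succ]; exact hP.1 _ ih _ hc
  refine ⟨fun h => ?_, fun hn => ?_⟩
  · by_contra! hn
    rcases hn.lt_or_eq with hn | rfl
    · obtain ⟨k, hk⟩ : ∃ k : ℕ, -n = k + 1 := ⟨(-n - 1).toNat, by omega⟩
      have := hpos k
      rw [← zpow_natCast, Nat.cast_succ, ← hk, zpow_neg] at this
      exact hP.2.2.1 _ h this
    · exact hP.2.2.2 (by simpa using h)
  · obtain ⟨k, rfl⟩ : ∃ k : ℕ, n = k + 1 := ⟨(n - 1).toNat, by omega⟩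
    exact_mod_cast hpos k

/-- In the left order with positive cone `P` (and `c ∈ P`), these are the `x` with
`c ^ (-a) < x < c ^ b` for some `a b : ℤ`. -/
def betweenPowers (P : Set G) (c : G) : Set G :=
  {x | (∃ k : ℤ, x * c ^ k ∈ P) ∧ ∃ k : ℤ, x⁻¹ * c ^ k ∈ P}

theorem inv_mem_betweenPowers {x : G} (hx : x ∈ betweenPowers P c) :
    x⁻¹ ∈ betweenPowers P c :=
  ⟨hx.2, by simpa only [inv_inv] using hx.1⟩

theorem IsPositiveCone.exists_least_mul_zpow_mem (hP : IsPositiveCone P) (hc : c ∈ P)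
    (hcZ : c ∈ center G) {x : G} (hx : x ∈ betweenPowers P c) :
    ∃ m : ℤ, x * c ^ m ∈ P ∧ ∀ k : ℤ, x * c ^ k ∈ P → m ≤ k := by
  obtain ⟨⟨a, ha⟩, ⟨b, hb⟩⟩ := hx
  refine Int.exists_least_of_bdd ⟨-b, fun k hk => ?_⟩ ⟨a, ha⟩
  have hprod := hP.1 _ hk _ hb
  rw [mul_assoc, ← mul_assoc (c ^ k), ← mem_center_iff.mp (zpow_mem hcZ k) x⁻¹,
    mul_assoc, mul_inv_cancel_left, ← zpow_add, hP.zpow_mem_iff hc] at hprod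
  omega

theorem IsPositiveCone.forall_mul_zpow_mem_or_forall_notMem (hP : IsPositiveCone P)
    (hc : c ∈ P) (hcZ : c ∈ center G) {x : G} (hx : x ∉ betweenPowers P c) :
    (∀ k : ℤ, x * c ^ k ∈ P) ∨ ∀ k : ℤ, x * c ^ k ∉ P := by
  simp only [betweenPowers, Set.mem_ofPred_eq, not_and_or, not_exists] at hx
  refine hx.symm.imp (fun hinv k => ?_) id
  rcases hP.2.1 (x * c ^ k) with h | h | h
  · exact h
  · rw [mul_inv_rev, ← zpow_neg, ← mem_center_iff.mp (zpow_mem hcZ _)] at h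
    exact absurd h (hinv _)
  · have := hinv (1 - k)
    rw [eq_inv_of_mul_eq_one_left h, inv_inv, ← zpow_add, add_sub_cancel, zpow_one] at this
    exact absurd hc this

theorem nonneg_of_least_mul_zpow_mem_conjCone (hcZ : c ∈ center G) {x g : G} {m e : ℤ}
    (hmin : ∀ k : ℤ, x * c ^ k ∈ P → m ≤ k) (he : g * x * g⁻¹ = x * c ^ e)
    (hm : x * c ^ m ∈ conjCone g P) : 0 ≤ e := by
  rw [mem_conjCone] at hm
  have hconj : g * (x * c ^ m) * g⁻¹ = x * c ^ (e + m) := by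
    rw [mul_assoc, mul_assoc, ← mem_center_iff.mp (zpow_mem hcZ m) g⁻¹, ← mul_assoc,
      ← mul_assoc, he, mul_assoc, zpow_add]
  have := hmin _ (hconj ▸ hm)
  omega

theorem conj_eq_self_of_least_mul_zpow_mem_conjCone (hcZ : c ∈ center G) {x g : G}
    {m m' e : ℤ} (hmin : ∀ k : ℤ, x * c ^ k ∈ P → m ≤ k)
    (hmin' : ∀ k : ℤ, x⁻¹ * c ^ k ∈ P → m' ≤ k) (he : g * x * g⁻¹ = x * c ^ e)
    (hm : x * c ^ m ∈ conjCone g P) (hm' : x⁻¹ * c ^ m' ∈ conjCone g P) :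
    g * x * g⁻¹ = x := by
  have he' : g * x⁻¹ * g⁻¹ = x⁻¹ * c ^ (-e) := by
    rw [zpow_neg, ← mul_inv_rev, ← mem_center_iff.mp (zpow_mem hcZ e) x, ← he]
    group
  have h₁ := nonneg_of_least_mul_zpow_mem_conjCone hcZ hmin he hm
  have h₂ := nonneg_of_least_mul_zpow_mem_conjCone hcZ hmin' he' hm'
  rw [he, le_antisymm (neg_nonneg.1 h₂) h₁, zpow_zero, mul_one]

theorem IsPositiveCone.exists_finset_forall_conjCone_eq_of_generator_mem [Group.FG G]
    (hP : IsPositiveCone P) (hzp : commutator G = zpowers c) (hcen : commutator G ≤ center G)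
    (hc : c ∈ P) :
    ∃ F : Finset G, ↑F ⊆ P ∧ ∀ g : G, ↑F ⊆ conjCone g P → conjCone g P = P := by
  have hcZ : c ∈ center G := hcen (hzp ▸ mem_zpowers c)
  choose! m hmP hmin using fun x (hx : x ∈ betweenPowers P c) =>
    hP.exists_least_mul_zpow_mem hc hcZ hx
  obtain ⟨T, hTB, hT, hBT⟩ :=
    Group.exists_finite_subset_le_closure_sup_commutator (betweenPowers P c)
  let F : Set G := (fun x => x * c ^ m x) '' T ∪ (fun x => x⁻¹ * c ^ m x⁻¹) '' T
  have hF : F.Finite := (hT.image _).union (hT.image _)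
  refine ⟨hF.toFinset, ?_, fun g hFg => ?_⟩
  · rw [hF.coe_toFinset]
    rintro _ (⟨x, hx, rfl⟩ | ⟨x, hx, rfl⟩)
    · exact hmP x (hTB hx)
    · exact hmP x⁻¹ (inv_mem_betweenPowers (hTB hx))
  rw [hF.coe_toFinset] at hFg
  have hTg : T ⊆ centralizer {g} := fun x hx => by
    obtain ⟨e, he⟩ := exists_conj_eq_mul_zpow hzp hcen g x
    have hxB := hTB hx
    have := conj_eq_self_of_least_mul_zpow_mem_conjCone hcZ (hmin x hxB)
      (hmin x⁻¹ (inv_mem_betweenPowers hxB)) he (hFg (.inl ⟨x, hx, rfl⟩))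
      (hFg (.inr ⟨x, hx, rfl⟩))
    exact mem_centralizer_singleton_iff.2 (mul_inv_eq_iff_eq_mul.1 this).symm
  have hBg : betweenPowers P c ⊆ centralizer {g} :=
    hBT.trans (sup_le (closure_le _ |>.2 hTg) (hcen.trans (center_le_centralizer _)))
  refine conjCone_eq_self_iff.2 fun y => ?_
  by_cases hy : y ∈ betweenPowers P c
  · rw [← mem_centralizer_singleton_iff.1 (hBg hy), mul_inv_cancel_right]
  obtain ⟨e, he⟩ := exists_conj_eq_mul_zpow hzp hcen g y
  rw [he]
  rcases hP.forall_mul_zpow_mem_or_forall_notMem hc hcZ hy with h | h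
  · exact iff_of_true (h e) (by simpa using h 0)
  · exact iff_of_false (h e) (by simpa using h 0)

end Cone

theorem no_condensed_cone_of_cyclic_central_commutator_general
    {G : Type*} [Group G] [Group.FG G]
    (hcyc : ∃ g : G, commutator G = Subgroup.zpowers g)
    (hcen : commutator G ≤ Subgroup.center G)
    (P : Set G) (hP : IsPositiveCone P) :
    ∃ F : Finset G, ↑F ⊆ P ∧
      ∀ g : G, ↑F ⊆ conjCone g P → conjCone g P = P := by
  obtain ⟨c, hzp⟩ := hcyc
  rcases hP.2.1 c with hc | hc | rfl
  · exact hP.exists_finset_forall_conjCone_eq_of_generator_mem hzp hcen hc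
  · exact hP.exists_finset_forall_conjCone_eq_of_generator_mem
      (by rwa [← zpowers_inv] at hzp) hcen hc
  · refine ⟨∅, by simp, fun g _ => conjCone_eq_self_iff.2 fun y => ?_⟩
    obtain ⟨e, he⟩ := exists_conj_eq_mul_zpow hzp hcen g y
    rw [he, one_zpow, mul_one]

/-- If `G` is a finitely generated nilpotent group whose commutator subgroup is cyclic
and contained in the center, then no positive cone of `G` is condensed for the
conjugation action. -/
theorem no_condensed_cone_of_cyclic_central_commutator
    {G : Type*} [Group G] [Group.FG G] [Group.IsNilpotent G]
    (hcyc : ∃ g : G, commutator G = Subgroup.zpowers g)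
    (hcen : commutator G ≤ Subgroup.center G)
    (P : Set G) (hP : IsPositiveCone P) :
    ∃ F : Finset G, ↑F ⊆ P ∧
      ∀ g : G, ↑F ⊆ conjCone g P → conjCone g P = P :=
  no_condensed_cone_of_cyclic_central_commutator_general hcyc hcen P hP
end

section
/- For every n ≥ 1, no positive cone of the generalized discrete Heisenberg group H_{2n+1} is condensed for the conjugation action: for every positive cone P of H_{2n+1} there exists a finite subset F ⊆ P such that every g ∈ H_{2n+1} with F ⊆ g⁻¹Pg satisfies g⁻¹Pg = P. (Equivalently, E_lo(H_{2n+1}) is smooth.) -/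
open Matrix

/-- The defining pattern of a (generalized) Heisenberg matrix: block form
`(1 a c; 0 Iₙ bᵀ; 0 0 1)`, i.e. ones on the diagonal and zeros everywhere outside the
first row, the last column and the diagonal. -/
def IsHeisMat (n : ℕ) (M : Matrix (Fin (n + 2)) (Fin (n + 2)) ℤ) : Prop :=
  (∀ i, M i i = 1) ∧
  ∀ i j : Fin (n + 2), i ≠ j → i ≠ 0 → j ≠ Fin.last (n + 1) → M i j = 0

namespace IsHeisMat

variable {n : ℕ}

lemma zero_ne_last : (0 : Fin (n + 2)) ≠ Fin.last (n + 1) := by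
  simp [Fin.ext_iff]

lemma one (n : ℕ) : IsHeisMat n 1 := by
  constructor
  · intro i; simp
  · intro i j hij _ _; simp [Matrix.one_apply, hij]

lemma mul {M N : Matrix (Fin (n + 2)) (Fin (n + 2)) ℤ}
    (hM : IsHeisMat n M) (hN : IsHeisMat n N) : IsHeisMat n (M * N) := by
  constructor
  · intro i
    rw [Matrix.mul_apply, Finset.sum_eq_single i]
    · rw [hM.1, hN.1, one_mul]
    · intro l _ hl
      by_cases hi0 : i = 0
      · subst hi0
        rw [hN.2 l 0 hl hl zero_ne_last, mul_zero]
      · by_cases hll : l = Fin.last (n + 1)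
        · subst hll
          rw [hN.2 (Fin.last (n + 1)) i hl zero_ne_last.symm (Ne.symm hl), mul_zero]
        · rw [hM.2 i l (Ne.symm hl) hi0 hll, zero_mul]
    · intro hi; exact absurd (Finset.mem_univ i) hi
  · intro i j hij hi0 hjl
    rw [Matrix.mul_apply, Finset.sum_eq_zero]
    intro l _
    by_cases hll : l = Fin.last (n + 1)
    · subst hll
      rw [hN.2 (Fin.last (n + 1)) j (Ne.symm hjl) (Ne.symm zero_ne_last) hjl, mul_zero]
    · by_cases hil : i = l
      · subst hil
        rw [hN.2 i j hij hi0 hjl, mul_zero]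
      · rw [hM.2 i l hil hi0 hll, zero_mul]

end IsHeisMat

section InvAux

variable {n : ℕ} {X : Matrix (Fin (n + 2)) (Fin (n + 2)) ℤ}

lemma sq_supp (hx1 : ∀ i, X i i = 0)
    (hx2 : ∀ i j, i ≠ 0 → j ≠ Fin.last (n + 1) → X i j = 0) :
    ∀ i j, ¬(i = 0 ∧ j = Fin.last (n + 1)) → (X * X) i j = 0 := by
  intro i j hij
  rw [Matrix.mul_apply, Finset.sum_eq_zero]
  intro l _
  by_cases hi0 : i = 0
  · have hjl : j ≠ Fin.last (n + 1) := fun h => hij ⟨hi0, h⟩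
    by_cases hl0 : l = 0
    · subst hi0; subst hl0; rw [hx1 0, zero_mul]
    · rw [hx2 l j hl0 hjl, mul_zero]
  · by_cases hll : l = Fin.last (n + 1)
    · subst hll
      by_cases hjl : j = Fin.last (n + 1)
      · subst hjl; rw [hx1, mul_zero]
      · rw [hx2 _ j IsHeisMat.zero_ne_last.symm hjl, mul_zero]
    · rw [hx2 i l hi0 hll, zero_mul]

lemma cube_zero (hx1 : ∀ i, X i i = 0)
    (hx2 : ∀ i j, i ≠ 0 → j ≠ Fin.last (n + 1) → X i j = 0) :
    X * X * X = 0 := by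
  ext i j
  rw [Matrix.mul_apply, Matrix.zero_apply, Finset.sum_eq_zero]
  intro l _
  by_cases h : i = 0 ∧ l = Fin.last (n + 1)
  · obtain ⟨hi0, hll⟩ := h
    subst hll
    by_cases hjl : j = Fin.last (n + 1)
    · subst hjl; rw [hx1, mul_zero]
    · rw [hx2 _ j IsHeisMat.zero_ne_last.symm hjl, mul_zero]
  · rw [sq_supp hx1 hx2 i l h, zero_mul]

end InvAux

/-- The generalized discrete Heisenberg group `H_{2n+1}`, realized as the subgroup of the
units of the ring of `(n+2) × (n+2)` integer matrices consisting of the matrices of block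
form `(1 a c; 0 Iₙ bᵀ; 0 0 1)`. -/
def Heisenberg (n : ℕ) : Subgroup (Matrix (Fin (n + 2)) (Fin (n + 2)) ℤ)ˣ where
  carrier := {U | IsHeisMat n U.val}
  one_mem' := IsHeisMat.one n
  mul_mem' hA hB := IsHeisMat.mul hA hB
  inv_mem' := by
    intro U hU
    replace hU : IsHeisMat n U.val := hU
    set M : Matrix (Fin (n + 2)) (Fin (n + 2)) ℤ := U.val with hMdef
    set X : Matrix (Fin (n + 2)) (Fin (n + 2)) ℤ := M - 1 with hXdef
    have hx1 : ∀ i, X i i = 0 := by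
      intro i; simp [hXdef, Matrix.sub_apply, hU.1 i]
    have hx2 : ∀ i j, i ≠ 0 → j ≠ Fin.last (n + 1) → X i j = 0 := by
      intro i j hi0 hjl
      by_cases hij : i = j
      · subst hij; exact hx1 i
      · simp [hXdef, Matrix.sub_apply, hU.2 i j hij hi0 hjl, Matrix.one_apply_ne hij]
    have hM1 : M = 1 + X := by rw [hXdef]; abel
    have hcube : X * X * X = 0 := cube_zero hx1 hx2
    have hright : M * (1 - X + X * X) = 1 := by
      rw [hM1]
      have : (1 + X) * (1 - X + X * X) = 1 + X * X * X := by noncomm_ring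
      rw [this, hcube, add_zero]
    have hinv : (U⁻¹).val = 1 - X + X * X := Units.inv_eq_of_mul_eq_one_right hright
    show IsHeisMat n _
    rw [hinv]
    constructor
    · intro i
      have h2 : (X * X) i i = 0 :=
        sq_supp hx1 hx2 i i (by rintro ⟨h0, hl⟩; exact IsHeisMat.zero_ne_last (h0 ▸ hl))
      simp [Matrix.add_apply, Matrix.sub_apply, hx1 i, h2]
    · intro i j hij hi0 hjl
      have h2 : (X * X) i j = 0 := sq_supp hx1 hx2 i j (fun h => hi0 h.1)
      simp [Matrix.add_apply, Matrix.sub_apply, hx2 i j hi0 hjl, h2,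
        Matrix.one_apply_ne hij]

/-!
Write `A : G → V = ℤⁿ × ℤⁿ` for the projection, whose kernel is the centre `⟨z⟩`, and assume
`z ∈ P` (otherwise use `z⁻¹`). Conjugation is `g h g⁻¹ = h z^{ω_g(A h)}` with `ω_g` additive, so
`h ∈ g⁻¹Pg ↔ h z^{ω_g(A h)} ∈ P`. A fibre of `A` lies entirely inside or entirely outside `P`
unless it meets both `P` and `P⁻¹`, and then `P` meets it in a half-line `{b z^t : t ≥ 0}`.
Since `V` is noetherian, the set `E = mixedFibres A P` of such classes spans the same subgroup
as a finite subset `S`; let `F` consist of the least elements `b` over `±v`, `v ∈ S`. If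
`F ⊆ g⁻¹Pg`, then `ω_g(±v) ≥ 0`, so `ω_g` vanishes on `E`, and conjugation by `g` preserves
`P` fibre by fibre.
-/

section PositiveCone

variable {G : Type*} [Group G] {P : Set G}

theorem mem_conjCone_iff {g x : G} : x ∈ conjCone g P ↔ g * x * g⁻¹ ∈ P := by
  constructor
  · rintro ⟨p, hp, rfl⟩
    simpa [mul_assoc] using hp
  · intro hx
    exact ⟨g * x * g⁻¹, hx, by group⟩

namespace IsPositiveCone

theorem mul_mem (hP : IsPositiveCone P) {a b : G} (ha : a ∈ P) (hb : b ∈ P) : a * b ∈ P :=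
  hP.1 a ha b hb

theorem inv_notMem (hP : IsPositiveCone P) {g : G} (hg : g ∈ P) : g⁻¹ ∉ P :=
  hP.2.2.1 g hg

theorem mem_or_inv_mem_or_eq_one (hP : IsPositiveCone P) (g : G) : g ∈ P ∨ g⁻¹ ∈ P ∨ g = 1 :=
  hP.2.1 g

theorem one_notMem (hP : IsPositiveCone P) : (1 : G) ∉ P :=
  hP.2.2.2

variable {z : G}

theorem pow_succ_mem (hP : IsPositiveCone P) (hz : z ∈ P) (m : ℕ) : z ^ (m + 1) ∈ P := by
  induction m with
  | zero => simpa using hz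
  | succ m ih => rw [pow_succ]; exact hP.mul_mem ih hz

theorem zpow_mem_iff_s1 (hP : IsPositiveCone P) (hz : z ∈ P) {k : ℤ} : z ^ k ∈ P ↔ 0 < k := by
  constructor
  · intro hk
    by_contra! hk0
    rcases hk0.lt_or_eq with hneg | rfl
    · obtain ⟨m, hm⟩ : ∃ m : ℕ, -k = m + 1 := ⟨(-k - 1).toNat, by omega⟩
      refine hP.inv_notMem hk ?_
      rw [← _root_.zpow_neg, hm]
      exact_mod_cast hP.pow_succ_mem hz m
    · exact hP.one_notMem (by simpa using hk)
  · intro hk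
    obtain ⟨m, rfl⟩ : ∃ m : ℕ, k = m + 1 := ⟨(k - 1).toNat, by omega⟩
    exact_mod_cast hP.pow_succ_mem hz m

theorem mul_zpow_mem_of_le (hP : IsPositiveCone P) (hz : z ∈ P) {x : G} {j k : ℤ}
    (hx : x * z ^ j ∈ P) (hjk : j ≤ k) : x * z ^ k ∈ P := by
  rcases hjk.eq_or_lt with rfl | hlt
  · exact hx
  · have hzk : z ^ (k - j) ∈ P := (hP.zpow_mem_iff_s1 hz).2 (by omega)
    simpa [mul_assoc, ← _root_.zpow_add] using hP.mul_mem hx hzk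

theorem nonneg_of_mul_zpow_mem (hP : IsPositiveCone P) (hz : z ∈ P) {b : G} (hb : b * z⁻¹ ∉ P)
    {t : ℤ} (ht : b * z ^ t ∈ P) : 0 ≤ t := by
  by_contra! h
  exact hb (by simpa using hP.mul_zpow_mem_of_le hz ht (show t ≤ -1 by omega))

theorem exists_mul_zpow_mem_mul_inv_notMem (hP : IsPositiveCone P) (hz : z ∈ P) {p q : G}
    (hp : p ∈ P) (hq : q ∈ P) (hqp : q * p ∈ Subgroup.zpowers z) :
    ∃ m : ℤ, p * z ^ m ∈ P ∧ p * z ^ m * z⁻¹ ∉ P := by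
  obtain ⟨k, hk⟩ := Subgroup.mem_zpowers_iff.1 hqp
  have hbdd : ∀ m, p * z ^ m ∈ P → -k < m := by
    intro m hm
    have : z ^ (k + m) ∈ P := by
      rw [_root_.zpow_add, hk, mul_assoc]
      exact hP.mul_mem hq hm
    have := (hP.zpow_mem_iff_s1 hz).1 this
    omega
  obtain ⟨m, hm, hleast⟩ := Int.exists_least_of_bdd ⟨-k, fun m hm => (hbdd m hm).le⟩
    ⟨0, by simpa using hp⟩
  refine ⟨m, hm, fun hm' => ?_⟩
  have := hleast (m - 1) (by simpa [_root_.zpow_sub, mul_assoc] using hm')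
  omega

theorem exists_mem_mul_mem_zpowers (hP : IsPositiveCone P) (hz : z ∈ P) {x : G} {s : ℤ}
    (hxs : x * z ^ s ∉ P) : ∃ q ∈ P, q * x ∈ Subgroup.zpowers z := by
  rcases hP.mem_or_inv_mem_or_eq_one (x * z ^ s) with h | h | h
  · exact absurd h hxs
  · exact ⟨_, h, -s, by group⟩
  · exact ⟨z, hz, 1 - s, by rw [eq_mul_inv_of_mul_eq h]; group⟩

end IsPositiveCone

end PositiveCone

theorem IsNoetherian.exists_finset_subset_forall_eq_zero {R M N : Type*} [Semiring R]
    [AddCommMonoid M] [Module R M] [IsNoetherian R M] [AddCommMonoid N] [Module R N]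
    (s : Set M) :
    ∃ t : Finset M, ↑t ⊆ s ∧ ∀ f : M →ₗ[R] N, (∀ x ∈ t, f x = 0) → ∀ x ∈ s, f x = 0 := by
  obtain ⟨t, hts, hspan⟩ :=
    (Submodule.fg_span_iff_fg_span_finset_subset s).1 (IsNoetherian.noetherian (R := R) _)
  refine ⟨t, hts, fun f hf x hx => ?_⟩
  have hle : Submodule.span R (t : Set M) ≤ LinearMap.ker f := Submodule.span_le.2 hf
  exact hle (hspan ▸ Submodule.subset_span hx)

section CentralExtension

open Multiplicative

variable {G V : Type*} [Group G] [AddCommGroup V] {P : Set G}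

def mixedFibres (A : G →* Multiplicative V) (P : Set G) : Set V :=
  {v | (∃ p ∈ P, A p = ofAdd v) ∧ ∃ q ∈ P, A q⁻¹ = ofAdd v}

variable {A : G →* Multiplicative V} {z : G}

theorem neg_mem_mixedFibres {v : V} (hv : v ∈ mixedFibres A P) : -v ∈ mixedFibres A P := by
  obtain ⟨⟨p, hp, hpv⟩, q, hq, hqv⟩ := hv
  exact ⟨⟨q, hq, by simpa [map_inv] using congrArg (·⁻¹) hqv⟩, p, hp, by simp [hpv]⟩

theorem exists_boundary_of_mem_mixedFibres (hP : IsPositiveCone P) (hz : z ∈ P)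
    (hker : A.ker = Subgroup.zpowers z) {v : V} (hv : v ∈ mixedFibres A P) :
    ∃ b ∈ P, b * z⁻¹ ∉ P ∧ A b = ofAdd v := by
  obtain ⟨⟨p, hp, hpv⟩, q, hq, hqv⟩ := hv
  have hqp : q * p ∈ Subgroup.zpowers z := by
    rw [← hker, MonoidHom.mem_ker, map_mul, hpv, ← inv_inv (A q), ← map_inv, hqv, inv_mul_cancel]
  have hAz : A z = 1 := A.mem_ker.1 (hker ▸ Subgroup.mem_zpowers z)
  obtain ⟨m, hm, hm'⟩ := hP.exists_mul_zpow_mem_mul_inv_notMem hz hp hq hqp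
  exact ⟨p * z ^ m, hm, hm', by simp [hAz, hpv]⟩

theorem mul_zpow_mem_iff_of_notMem_mixedFibres (hP : IsPositiveCone P) (hz : z ∈ P)
    (hker : A.ker = Subgroup.zpowers z) {x : G} (hx : toAdd (A x) ∉ mixedFibres A P) (s : ℤ) :
    x * z ^ s ∈ P ↔ x ∈ P := by
  have hAz : ∀ k : ℤ, A (z ^ k) = 1 :=
    fun k => A.mem_ker.1 (hker ▸ Subgroup.zpow_mem_zpowers z k)
  have hfull : ∀ y ∈ P, A y = A x → ∀ t : ℤ, y * z ^ t ∈ P := by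
    intro y hy hyx t
    by_contra hyt
    obtain ⟨q, hq, k, hk⟩ := hP.exists_mem_mul_mem_zpowers hz hyt
    refine hx ⟨⟨y, hy, hyx⟩, q, hq, ?_⟩
    have : A q * A y = 1 := by rw [← map_mul, ← hk, hAz]
    rw [ofAdd_toAdd, ← hyx, map_inv]
    exact inv_eq_of_mul_eq_one_right this
  refine ⟨fun hxs => ?_, fun hxP => hfull x hxP rfl s⟩
  simpa [mul_assoc, ← _root_.zpow_add] using hfull _ hxs (by simp [hAz]) (-s)

theorem exists_finset_forall_conjCone_eq_of_mem [IsNoetherian ℤ V] (hP : IsPositiveCone P)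
    (hz : z ∈ P) (hker : A.ker = Subgroup.zpowers z) (w : G → V →+ ℤ)
    (hconj : ∀ g h, g * h * g⁻¹ = h * z ^ w g (toAdd (A h))) :
    ∃ F : Finset G, ↑F ⊆ P ∧ ∀ g : G, ↑F ⊆ conjCone g P → conjCone g P = P := by
  classical
  obtain ⟨S, hSE, hS⟩ :=
    IsNoetherian.exists_finset_subset_forall_eq_zero (R := ℤ) (N := ℤ) (mixedFibres A P)
  have hbdry : ∀ v ∈ mixedFibres A P, ∃ b ∈ P, b * z⁻¹ ∉ P ∧ A b = ofAdd v :=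
    fun v hv => exists_boundary_of_mem_mixedFibres hP hz hker hv
  choose! b hbP hbz hAb using hbdry
  have hSE' : ∀ v ∈ S, -v ∈ mixedFibres A P := fun v hv => neg_mem_mixedFibres (hSE hv)
  refine ⟨S.image b ∪ S.image (fun v => b (-v)), ?_, fun g hF => ?_⟩
  · simp only [Finset.coe_union, Finset.coe_image, Set.union_subset_iff, Set.image_subset_iff]
    exact ⟨fun v hv => hbP v (hSE hv), fun v hv => hbP (-v) (hSE' v hv)⟩
  have hmem : ∀ x, x ∈ conjCone g P ↔ x * z ^ w g (toAdd (A x)) ∈ P := fun x => by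
    rw [mem_conjCone_iff, hconj]
  have hwS : ∀ v ∈ S, w g v = 0 := by
    intro v hv
    have h₁ : 0 ≤ w g v := by
      have := (hmem _).1 (hF (Finset.mem_union_left _ (Finset.mem_image_of_mem _ hv)))
      simpa [hAb v (hSE hv)] using hP.nonneg_of_mul_zpow_mem hz (hbz v (hSE hv)) this
    have h₂ : 0 ≤ w g (-v) := by
      have := (hmem _).1 (hF (Finset.mem_union_right _ (Finset.mem_image_of_mem _ hv)))
      simpa [hAb (-v) (hSE' v hv)] using hP.nonneg_of_mul_zpow_mem hz (hbz _ (hSE' v hv)) this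
    rw [map_neg] at h₂
    omega
  have hwE := hS (w g).toIntLinearMap hwS
  ext x
  rw [hmem]
  by_cases hx : toAdd (A x) ∈ mixedFibres A P
  · rw [show w g (toAdd (A x)) = 0 from hwE _ hx, zpow_zero, mul_one]
  · exact mul_zpow_mem_iff_of_notMem_mixedFibres hP hz hker hx _

theorem exists_finset_forall_conjCone_eq [IsNoetherian ℤ V] (hP : IsPositiveCone P)
    (hker : A.ker = Subgroup.zpowers z) (w : G → V →+ ℤ)
    (hconj : ∀ g h, g * h * g⁻¹ = h * z ^ w g (toAdd (A h))) :
    ∃ F : Finset G, ↑F ⊆ P ∧ ∀ g : G, ↑F ⊆ conjCone g P → conjCone g P = P := by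
  rcases hP.mem_or_inv_mem_or_eq_one z with hz | hz | rfl
  · exact exists_finset_forall_conjCone_eq_of_mem hP hz hker w hconj
  · refine exists_finset_forall_conjCone_eq_of_mem hP hz (by rwa [Subgroup.zpowers_inv])
      (fun g => -w g) fun g h => ?_
    simp [hconj]
  · refine ⟨∅, by simp, fun g _ => ?_⟩
    ext x
    simp [mem_conjCone_iff, hconj]

end CentralExtension

namespace Heisenberg

open Multiplicative

variable {n : ℕ}

/-- The index of the `i`-th row and column of the block `Iₙ`. -/
def mid (i : Fin n) : Fin (n + 2) := i.castSucc.succ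

theorem mid_ne_zero (i : Fin n) : mid i ≠ 0 := by
  simp [mid, Fin.ext_iff]

theorem mid_ne_last (i : Fin n) : mid i ≠ Fin.last (n + 1) := by
  rw [mid, Ne, Fin.ext_iff, Fin.val_succ, Fin.val_castSucc, Fin.val_last]
  omega

theorem exists_mid_eq {j : Fin (n + 2)} (h0 : j ≠ 0) (hl : j ≠ Fin.last (n + 1)) :
    ∃ i, mid i = j := by
  have h0' : (j : ℕ) ≠ 0 := fun h => h0 (Fin.ext h)
  have hl' : (j : ℕ) ≠ n + 1 := fun h => hl (Fin.ext h)
  exact ⟨⟨j - 1, by omega⟩, by ext; simp only [mid, Fin.val_succ, Fin.val_castSucc]; omega⟩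

theorem sum_eq_zero_add_mid_add_last {M : Type*} [AddCommMonoid M] (f : Fin (n + 2) → M) :
    ∑ l, f l = f 0 + ∑ i : Fin n, f (mid i) + f (Fin.last (n + 1)) := by
  rw [Fin.sum_univ_succ, Fin.sum_univ_castSucc]
  exact (add_assoc _ _ _).symm

def mat (g : Heisenberg n) : Matrix (Fin (n + 2)) (Fin (n + 2)) ℤ := g.1.1

theorem mat_mul (g h : Heisenberg n) : mat (g * h) = mat g * mat h := rfl

theorem mat_apply_self (g : Heisenberg n) (i : Fin (n + 2)) : mat g i i = 1 := g.2.1 i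

theorem mat_apply_of_ne (g : Heisenberg n) {i j : Fin (n + 2)} (hij : i ≠ j) (hi : i ≠ 0)
    (hj : j ≠ Fin.last (n + 1)) : mat g i j = 0 :=
  g.2.2 i j hij hi hj

def topRow (g : Heisenberg n) (i : Fin n) : ℤ := mat g 0 (mid i)

def lastCol (g : Heisenberg n) (i : Fin n) : ℤ := mat g (mid i) (Fin.last (n + 1))

def corner (g : Heisenberg n) : ℤ := mat g 0 (Fin.last (n + 1))

theorem topRow_mul (g h : Heisenberg n) : topRow (g * h) = topRow g + topRow h := by
  ext i
  rw [topRow, mat_mul, Matrix.mul_apply, Finset.sum_eq_add 0 (mid i) (mid_ne_zero i).symm]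
  · rw [mat_apply_self, mat_apply_self, one_mul, mul_one, add_comm]
    rfl
  · rintro l - ⟨hl0, hli⟩
    rw [mat_apply_of_ne h hli hl0 (mid_ne_last i), mul_zero]
  all_goals simp

theorem lastCol_mul (g h : Heisenberg n) : lastCol (g * h) = lastCol g + lastCol h := by
  ext i
  rw [lastCol, mat_mul, Matrix.mul_apply,
    Finset.sum_eq_add (mid i) (Fin.last (n + 1)) (mid_ne_last i)]
  · rw [mat_apply_self, mat_apply_self, one_mul, mul_one, add_comm]
    rfl
  · rintro l - ⟨hli, hll⟩
    rw [mat_apply_of_ne g (Ne.symm hli) (mid_ne_zero i) hll, zero_mul]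
  all_goals simp

theorem corner_mul (g h : Heisenberg n) :
    corner (g * h) = corner g + corner h + ∑ i, topRow g i * lastCol h i := by
  rw [corner, mat_mul, Matrix.mul_apply, sum_eq_zero_add_mid_add_last, mat_apply_self,
    mat_apply_self, one_mul, mul_one]
  simp only [corner, topRow, lastCol]
  ring

/-- The projection `H_{2n+1} → ℤⁿ × ℤⁿ`, `(1 a c; 0 Iₙ bᵀ; 0 0 1) ↦ (a, b)`. -/
def toAB (n : ℕ) : Heisenberg n →* Multiplicative ((Fin n → ℤ) × (Fin n → ℤ)) :=
  MonoidHom.mk' (fun g => ofAdd (topRow g, lastCol g)) fun g h => by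
    simp [topRow_mul, lastCol_mul, ← ofAdd_add]

theorem ext_of_toAB_eq {g h : Heisenberg n} (hab : toAB n g = toAB n h)
    (hc : corner g = corner h) : g = h := by
  obtain ⟨ha, hb⟩ : topRow g = topRow h ∧ lastCol g = lastCol h := by
    simpa [toAB] using hab
  refine Subtype.ext (Units.ext (Matrix.ext fun i j => ?_))
  change mat g i j = mat h i j
  by_cases hij : i = j
  · rw [hij, mat_apply_self, mat_apply_self]
  by_cases hi : i = 0 <;> by_cases hj : j = Fin.last (n + 1)
  · subst hi hj
    exact hc
  · subst hi
    obtain ⟨k, rfl⟩ := exists_mid_eq (Ne.symm hij) hj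
    exact congrFun ha k
  · subst hj
    obtain ⟨k, rfl⟩ := exists_mid_eq hi hij
    exact congrFun hb k
  · rw [mat_apply_of_ne g hij hi hj, mat_apply_of_ne h hij hi hj]

theorem isHeisMat_transvection (c : ℤ) :
    IsHeisMat n (Matrix.transvection 0 (Fin.last (n + 1)) c) := by
  refine ⟨fun i => ?_, fun i j hij hi _ => ?_⟩
  · simp only [Matrix.transvection, Matrix.add_apply, Matrix.one_apply_eq, add_eq_left]
    exact Matrix.single_apply_of_ne _ _ _ _ _ fun h => IsHeisMat.zero_ne_last (h.1.trans h.2.symm)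
  · simp [Matrix.transvection, hij, Ne.symm hi]

/-- `k ↦ (1 0 k; 0 Iₙ 0; 0 0 1)`, onto the centre. -/
def central (n : ℕ) : Multiplicative ℤ →* Heisenberg n where
  toFun k := ⟨⟨Matrix.transvection 0 (Fin.last (n + 1)) k.toAdd,
      Matrix.transvection 0 (Fin.last (n + 1)) (-k.toAdd),
      by simp [Matrix.transvection_mul_transvection_same _ _ IsHeisMat.zero_ne_last],
      by simp [Matrix.transvection_mul_transvection_same _ _ IsHeisMat.zero_ne_last]⟩,
    isHeisMat_transvection _⟩
  map_one' := by ext1; ext1; simp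
  map_mul' k l := by
    ext1; ext1
    simp [Matrix.transvection_mul_transvection_same _ _ IsHeisMat.zero_ne_last]

theorem topRow_central (k : Multiplicative ℤ) : topRow (central n k) = 0 := by
  ext i
  simp [topRow, mat, central, Matrix.transvection, (mid_ne_zero i).symm,
    (mid_ne_last i).symm]

theorem lastCol_central (k : Multiplicative ℤ) : lastCol (central n k) = 0 := by
  ext i
  simp [lastCol, mat, central, Matrix.transvection, mid_ne_last i,
    (mid_ne_zero i).symm]

theorem corner_central (k : Multiplicative ℤ) : corner (central n k) = k.toAdd := by
  simp [corner, mat, central, Matrix.transvection]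

theorem toAB_central (k : Multiplicative ℤ) : toAB n (central n k) = 1 := by
  simp [toAB, topRow_central, lastCol_central]

def zeta (n : ℕ) : Heisenberg n := central n (ofAdd 1)

theorem zeta_zpow (k : ℤ) : zeta n ^ k = central n (ofAdd k) := by
  rw [zeta, ← map_zpow, ← ofAdd_zsmul, smul_eq_mul, mul_one]

theorem ker_toAB : (toAB n).ker = Subgroup.zpowers (zeta n) := by
  ext h
  simp only [MonoidHom.mem_ker, Subgroup.mem_zpowers_iff, zeta_zpow]
  constructor
  · intro h1
    refine ⟨corner h, ext_of_toAB_eq ?_ ?_⟩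
    · rw [h1, toAB_central]
    · rw [corner_central, toAdd_ofAdd]
  · rintro ⟨k, rfl⟩
    exact toAB_central _

def symplectic (g : Heisenberg n) : (Fin n → ℤ) × (Fin n → ℤ) →+ ℤ :=
  AddMonoidHom.mk' (fun v => ∑ i, topRow g i * v.2 i - ∑ i, v.1 i * lastCol g i) fun v w => by
    simp only [Prod.fst_add, Prod.snd_add, Pi.add_apply, mul_add, add_mul,
      Finset.sum_add_distrib]
    ring

theorem conj_eq_mul_zeta_zpow (g h : Heisenberg n) :
    g * h * g⁻¹ = h * zeta n ^ symplectic g (toAdd (toAB n h)) := by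
  rw [mul_inv_eq_iff_eq_mul]
  apply ext_of_toAB_eq
  · rw [map_mul, map_mul, map_mul, zeta_zpow, toAB_central, mul_one, mul_comm]
  · rw [corner_mul, corner_mul, corner_mul, topRow_mul, zeta_zpow, corner_central,
      topRow_central, lastCol_central, toAdd_ofAdd]
    simp only [symplectic, toAB, AddMonoidHom.mk'_apply, MonoidHom.mk'_apply, toAdd_ofAdd,
      Pi.zero_apply, Pi.add_apply, mul_zero, add_zero, Finset.sum_const_zero]
    ring

end Heisenberg

theorem heisenberg_no_condensed_cone_general (n : ℕ)
    (P : Set ↥(Heisenberg n)) (hP : IsPositiveCone P) :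
    ∃ F : Finset ↥(Heisenberg n), ↑F ⊆ P ∧
      ∀ g : ↥(Heisenberg n), ↑F ⊆ conjCone g P → conjCone g P = P :=
  exists_finset_forall_conjCone_eq hP Heisenberg.ker_toAB Heisenberg.symplectic
    Heisenberg.conj_eq_mul_zeta_zpow

/-- No positive cone of the generalized discrete Heisenberg group `H_{2n+1}` (`n ≥ 1`)
is condensed for the conjugation action. -/
theorem heisenberg_no_condensed_cone (n : ℕ) (hn : 1 ≤ n)
    (P : Set ↥(Heisenberg n)) (hP : IsPositiveCone P) :
    ∃ F : Finset ↥(Heisenberg n), ↑F ⊆ P ∧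
      ∀ g : ↥(Heisenberg n), ↑F ⊆ conjCone g P → conjCone g P = P :=
  heisenberg_no_condensed_cone_general n P hP
end

section
/- Let G be a finitely generated nilpotent group. Then every positive cone P of G is Conradian: for all f, g ∈ P there exists a natural number n such that g⁻¹ f gⁿ ∈ P. -/
namespace IsPositiveCone

variable {G : Type*} [Group G] {P : Set G}

noncomputable abbrev linearOrder (hP : IsPositiveCone P) : LinearOrder G where
  le x y := x⁻¹ * y ∈ P ∨ x = y
  lt x y := x⁻¹ * y ∈ P
  le_refl x := Or.inr rfl
  le_trans x y z := by
    rintro (hxy | rfl) (hyz | rfl)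
    · exact Or.inl (by simpa [mul_assoc] using hP.1 _ hxy _ hyz)
    all_goals simp_all
  lt_iff_le_not_ge x y := by
    constructor
    · intro hxy
      refine ⟨Or.inl hxy, ?_⟩
      rintro (hyx | rfl)
      · exact hP.2.2.1 _ hxy (by simpa using hyx)
      · exact hP.2.2.2 (by simpa using hxy)
    · rintro ⟨hxy | rfl, hyx⟩
      · exact hxy
      · exact absurd (Or.inr rfl) hyx
  le_antisymm x y := by
    rintro (hxy | rfl) (hyx | hyx)
    · exact absurd (by simpa using hyx) (hP.2.2.1 _ hxy)
    all_goals simp_all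
  le_total x y := by
    rcases hP.2.1 (x⁻¹ * y) with hxy | hyx | hxy
    · exact Or.inl (Or.inl hxy)
    · exact Or.inr (Or.inl (by simpa using hyx))
    · exact Or.inl (Or.inr (inv_mul_eq_one.mp hxy))
  toDecidableLE := Classical.decRel _

lemma mulLeftMono (hP : IsPositiveCone P) : letI := hP.linearOrder; MulLeftMono G :=
  letI := hP.linearOrder
  ⟨fun c x y (hxy : x⁻¹ * y ∈ P ∨ x = y) ↦
    show (c * x)⁻¹ * (c * y) ∈ P ∨ c * x = c * y by simpa [mul_assoc] using hxy⟩

end IsPositiveCone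

section Malcev

variable {G : Type*} [Group G]

def malcevWords (a b : G) : ℕ → G × G
  | 0 => (a, b)
  | k + 1 => ((malcevWords a b k).1 * (malcevWords a b k).2,
      (malcevWords a b k).2 * (malcevWords a b k).1)

open scoped commutatorElement in
lemma malcevWords_fst_mul_inv_snd_mem_lowerCentralSeries (a b : G) (k : ℕ) :
    (malcevWords a b k).1 * (malcevWords a b k).2⁻¹ ∈ (⊤ : Subgroup G).lowerCentralSeries k := by
  induction k with
  | zero => exact Subgroup.mem_top _
  | succ k ih =>
    have hcomm : (malcevWords a b (k + 1)).1 * (malcevWords a b (k + 1)).2⁻¹ =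
        ⁅(malcevWords a b k).1 * (malcevWords a b k).2⁻¹, (malcevWords a b k).2⁆ := by
      simp only [malcevWords, commutatorElement_def]
      group
    rw [hcomm, Subgroup.lowerCentralSeries_succ]
    exact Subgroup.commutator_mem_commutator ih (Subgroup.mem_top _)

lemma exists_malcevWords_fst_eq_snd [Group.IsNilpotent G] (a b : G) :
    ∃ k, (malcevWords a b k).1 = (malcevWords a b k).2 := by
  obtain ⟨k, hk⟩ := Subgroup.nilpotent_iff_lowerCentralSeries.mp ‹Group.IsNilpotent G›
  have hmem := malcevWords_fst_mul_inv_snd_mem_lowerCentralSeries a b k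
  rw [hk, Subgroup.mem_bot, mul_inv_eq_one] at hmem
  exact ⟨k, hmem⟩

lemma malcevWords_eq_mul_mem_closure (a b : G) (k : ℕ) :
    (∃ w ∈ Submonoid.closure {a, b}, (malcevWords a b k).1 = a * w) ∧
      ∃ w ∈ Submonoid.closure {a, b}, (malcevWords a b k).2 = b * w := by
  induction k with
  | zero => exact ⟨⟨1, one_mem _, (mul_one a).symm⟩, ⟨1, one_mem _, (mul_one b).symm⟩⟩
  | succ k ih =>
    obtain ⟨⟨u, hu, hX⟩, ⟨v, hv, hY⟩⟩ := ih
    have ha : a ∈ Submonoid.closure {a, b} := Submonoid.subset_closure (by simp)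
    have hb : b ∈ Submonoid.closure {a, b} := Submonoid.subset_closure (by simp)
    refine ⟨⟨u * (b * v), ?_, ?_⟩, ⟨v * (a * u), ?_, ?_⟩⟩
    · exact mul_mem hu (mul_mem hb hv)
    · simp only [malcevWords, hX, hY, mul_assoc]
    · exact mul_mem hv (mul_mem ha hu)
    · simp only [malcevWords, hX, hY, mul_assoc]

end Malcev

section LeftOrdered

variable {G : Type*} [Group G] [LinearOrder G] [MulLeftMono G]

lemma exists_le_pow_of_mem_closure {f g : G} (hfg : ∀ n : ℕ, f * g ^ n ≤ g) {w : G}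
    (hw : w ∈ Submonoid.closure {g, f * g}) : ∃ m : ℕ, w ≤ g ^ m := by
  induction hw using Submonoid.closure_induction_left with
  | one => exact ⟨0, by simp⟩
  | mul_left x hx w _ ih =>
    obtain ⟨m, hm⟩ := ih
    rcases hx with rfl | rfl
    · exact ⟨m + 1, by simpa [pow_succ'] using mul_le_mul_right hm x⟩
    · refine ⟨1, ?_⟩
      calc f * g * w ≤ f * g * g ^ m := mul_le_mul_right hm _
        _ = f * g ^ (m + 1) := by rw [mul_assoc, pow_succ']
        _ ≤ g ^ 1 := by simpa using hfg (m + 1)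

theorem exists_lt_mul_pow_of_isNilpotent [Group.IsNilpotent G] {f g : G} (hf : 1 ≤ f)
    (hg : 1 < g) : ∃ n : ℕ, g < f * g ^ n := by
  by_contra! hfg
  have hpos : ({g, f * g} : Set G) ⊆ Submonoid.oneLE G := by
    rintro x (rfl | rfl)
    exacts [hg.le, one_le_mul hf hg.le]
  obtain ⟨k, hk⟩ := exists_malcevWords_fst_eq_snd g (f * g)
  obtain ⟨⟨u, hu, hX⟩, ⟨v, hv, hY⟩⟩ := malcevWords_eq_mul_mem_closure g (f * g) k
  obtain ⟨m, hm⟩ := exists_le_pow_of_mem_closure hfg hv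
  have hY_lt : f * g * v < g :=
    calc f * g * v ≤ f * g * g ^ m := mul_le_mul_right hm _
      _ = f * g ^ (m + 1) * 1 := by rw [mul_one, mul_assoc, pow_succ']
      _ < f * g ^ (m + 1) * g := mul_lt_mul_right hg _
      _ = f * g ^ (m + 2) := by rw [mul_assoc, ← pow_succ]
      _ ≤ g := hfg _
  have hX_ge : g ≤ g * u := le_mul_of_one_le_right' (Submonoid.closure_le.mpr hpos hu)
  exact (hY_lt.trans_le hX_ge).ne (hY.symm.trans (hk.symm.trans hX))

end LeftOrdered

theorem positiveCone_conradian_of_nilpotent_general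
    {G : Type*} [Group G] [Group.IsNilpotent G]
    (P : Set G) (hP : IsPositiveCone P) :
    ∀ f ∈ P, ∀ g ∈ P, ∃ n : ℕ, g⁻¹ * f * g ^ n ∈ P := by
  let := hP.linearOrder
  have := hP.mulLeftMono
  have one_lt_of_mem {x : G} (hx : x ∈ P) : 1 < x := show 1⁻¹ * x ∈ P by simpa using hx
  intro f hf g hg
  obtain ⟨n, hn⟩ := exists_lt_mul_pow_of_isNilpotent (one_lt_of_mem hf).le (one_lt_of_mem hg)
  exact ⟨n, by rw [mul_assoc]; exact hn⟩

/-- Every positive cone of a finitely generated nilpotent group is Conradian. -/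
theorem positiveCone_conradian_of_nilpotent
    {G : Type*} [Group G] [Group.FG G] [Group.IsNilpotent G]
    (P : Set G) (hP : IsPositiveCone P) :
    ∀ f ∈ P, ∀ g ∈ P, ∃ n : ℕ, g⁻¹ * f * g ^ n ∈ P :=
  positiveCone_conradian_of_nilpotent_general P hP
end

section
/- Let G be a finitely generated nilpotent group, P a positive cone of G, and C a normal subgroup of G that is convex with respect to P and satisfies g⁻¹(P \ C)g = P \ C for all g ∈ G. If there exists a finite subset F* ⊆ P ∩ C such that every g ∈ G with F* ⊆ g⁻¹(P ∩ C)g satisfies g⁻¹(P ∩ C)g = P ∩ C, then P is not condensed: there exists a finite subset F ⊆ P such that every g ∈ G with F ⊆ g⁻¹Pg satisfies g⁻¹Pg = P. -/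
/-- A subset `C` of a group is convex with respect to a positive cone `P` if any
element lying between two elements of `C` (for the order `x ≼ y ↔ x⁻¹ * y ∈ P ∪ {1}`)
belongs to `C`. -/
def IsConvexIn {G : Type*} [Group G] (P : Set G) (C : Set G) : Prop :=
  ∀ g ∈ C, ∀ h ∈ C, ∀ f : G,
    (g⁻¹ * f ∈ P ∨ g⁻¹ * f = 1) → (f⁻¹ * h ∈ P ∨ f⁻¹ * h = 1) → f ∈ C

/-! Conjugation by `g` fixes `P \ C`, so `g⁻¹ P g = g⁻¹ (P ∩ C) g ∪ (P \ C)`. Since `F*` lies in `C`,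
`F* ⊆ g⁻¹ P g` already forces `F* ⊆ g⁻¹ (P ∩ C) g`; discreteness then gives `g⁻¹ (P ∩ C) g = P ∩ C`,
and hence `g⁻¹ P g = P`. -/

section ConjCone

variable {G : Type*} [Group G] {g : G} {P S : Set G}

theorem conjCone_union (g : G) (A B : Set G) :
    conjCone g (A ∪ B) = conjCone g A ∪ conjCone g B :=
  Set.image_union _ A B

theorem conjCone_eq_conjCone_inter_union_diff (hfix : conjCone g (P \ S) = P \ S) :
    conjCone g P = conjCone g (P ∩ S) ∪ (P \ S) := by
  conv_lhs => rw [← Set.inter_union_sdiff P S]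
  rw [conjCone_union, hfix]

theorem subset_conjCone_inter_of_subset_conjCone {F : Set G} (hFS : F ⊆ S)
    (hfix : conjCone g (P \ S) = P \ S) (hF : F ⊆ conjCone g P) :
    F ⊆ conjCone g (P ∩ S) := by
  intro x hx
  rcases conjCone_eq_conjCone_inter_union_diff hfix ▸ hF hx with hxPS | hxdiff
  · exact hxPS
  · exact absurd (hFS hx) hxdiff.2

theorem conjCone_eq_self_of_conjCone_inter_eq (hfix : conjCone g (P \ S) = P \ S)
    (hinter : conjCone g (P ∩ S) = P ∩ S) : conjCone g P = P := by
  rw [conjCone_eq_conjCone_inter_union_diff hfix, hinter, Set.inter_union_sdiff]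

end ConjCone

theorem not_condensed_of_discrete_restriction_general
    {G : Type*} [Group G]
    (P : Set G) (C : Subgroup G)
    (hfix : ∀ g : G, conjCone g (P \ ↑C) = P \ ↑C)
    (hdisc : ∃ Fstar : Finset G, ↑Fstar ⊆ P ∩ ↑C ∧
      ∀ g : G, ↑Fstar ⊆ conjCone g (P ∩ ↑C) → conjCone g (P ∩ ↑C) = P ∩ ↑C) :
    ∃ F : Finset G, ↑F ⊆ P ∧
      ∀ g : G, ↑F ⊆ conjCone g P → conjCone g P = P := by
  obtain ⟨Fstar, hFstar, hdisc⟩ := hdisc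
  refine ⟨Fstar, fun x hx => (hFstar hx).1, fun g hg => ?_⟩
  have hFstarC : (Fstar : Set G) ⊆ C := fun x hx => (hFstar hx).2
  exact conjCone_eq_self_of_conjCone_inter_eq (hfix g)
    (hdisc g (subset_conjCone_inter_of_subset_conjCone hFstarC (hfix g) hg))

/-- If `C` is a convex normal subgroup with `g⁻¹ (P \ C) g = P \ C` for all `g`, and the
cone `P ∩ C` of `C` has a discrete conjugacy orbit, then `P` is not condensed. -/
theorem not_condensed_of_discrete_restriction
    {G : Type*} [Group G] [Group.FG G] [Group.IsNilpotent G]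
    (P : Set G) (hP : IsPositiveCone P)
    (C : Subgroup G) (hCnormal : C.Normal)
    (hconv : IsConvexIn P (C : Set G))
    (hfix : ∀ g : G, conjCone g (P \ ↑C) = P \ ↑C)
    (hdisc : ∃ Fstar : Finset G, ↑Fstar ⊆ P ∩ ↑C ∧
      ∀ g : G, ↑Fstar ⊆ conjCone g (P ∩ ↑C) → conjCone g (P ∩ ↑C) = P ∩ ↑C) :
    ∃ F : Finset G, ↑F ⊆ P ∧
      ∀ g : G, ↑F ⊆ conjCone g P → conjCone g P = P :=
  not_condensed_of_discrete_restriction_general P C hfix hdisc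
end

section
/- Let G be a finitely generated nilpotent group, P a positive cone of G, and C a normal subgroup of G that is convex with respect to P and satisfies g⁻¹(P \ C)g = P \ C for all g ∈ G. If P ∩ C is a limit point of its G-conjugation orbit, i.e., for every finite subset F* ⊆ P ∩ C there exists g ∈ G with g⁻¹(P ∩ C)g ≠ P ∩ C and F* ⊆ g⁻¹(P ∩ C)g, then P is condensed: for every finite subset F ⊆ P there exists g ∈ G with g⁻¹Pg ≠ P and F ⊆ g⁻¹Pg. -/
section ConjCone

variable {G : Type*} [Group G]

theorem conjCone_mono (g : G) {s t : Set G} (h : s ⊆ t) : conjCone g s ⊆ conjCone g t :=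
  Set.image_mono h

theorem conjCone_inter (g : G) (s t : Set G) :
    conjCone g (s ∩ t) = conjCone g s ∩ conjCone g t :=
  Set.image_inter (fun _ _ h => by simpa using h)

theorem conjCone_subgroup_of_normal {C : Subgroup G} (hC : C.Normal) (g : G) :
    conjCone g (C : Set G) = C := by
  ext x
  constructor
  · rintro ⟨c, hc, rfl⟩
    simpa using hC.conj_mem c hc g⁻¹
  · intro hx
    exact ⟨g * x * g⁻¹, hC.conj_mem x hx g, by group⟩

theorem conjCone_ne_of_conjCone_inter_ne {C : Subgroup G} (hC : C.Normal) {g : G}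
    {P : Set G} (h : conjCone g (P ∩ C) ≠ P ∩ C) : conjCone g P ≠ P := by
  intro hP
  apply h
  rw [conjCone_inter, conjCone_subgroup_of_normal hC, hP]

theorem subset_conjCone_of_inter_subset {C : Subgroup G} {g : G} {P F : Set G}
    (hfix : conjCone g (P \ C) = P \ C) (hF : F ⊆ P)
    (hFC : F ∩ C ⊆ conjCone g (P ∩ C)) : F ⊆ conjCone g P := by
  intro x hx
  by_cases hxC : x ∈ C
  · exact conjCone_mono g Set.inter_subset_left (hFC ⟨hx, hxC⟩)
  · have hxPC : x ∈ conjCone g (P \ C) := by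
      rw [hfix]; exact ⟨hF hx, hxC⟩
    exact conjCone_mono g Set.sdiff_subset hxPC

end ConjCone

theorem condensed_of_condensed_restriction_general
    {G : Type*} [Group G]
    (P : Set G)
    (C : Subgroup G) (hCnormal : C.Normal)
    (hfix : ∀ g : G, conjCone g (P \ ↑C) = P \ ↑C)
    (hlim : ∀ Fstar : Finset G, ↑Fstar ⊆ P ∩ ↑C →
      ∃ g : G, conjCone g (P ∩ ↑C) ≠ P ∩ ↑C ∧ ↑Fstar ⊆ conjCone g (P ∩ ↑C)) :
    ∀ F : Finset G, ↑F ⊆ P →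
      ∃ g : G, conjCone g P ≠ P ∧ ↑F ⊆ conjCone g P := by
  classical
  intro F hF
  have hFC : (↑(F.filter (· ∈ C)) : Set G) = ↑F ∩ ↑C := by simp [Set.ext_iff]
  obtain ⟨g, hne, hsub⟩ := hlim (F.filter (· ∈ C)) (hFC ▸ Set.inter_subset_inter_left _ hF)
  exact ⟨g, conjCone_ne_of_conjCone_inter_ne hCnormal hne,
    subset_conjCone_of_inter_subset (hfix g) hF (hFC ▸ hsub)⟩

/-- If `C` is a convex normal subgroup with `g⁻¹ (P \ C) g = P \ C` for all `g`, and the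
cone `P ∩ C` of `C` is a limit point of its conjugacy orbit, then `P` is condensed. -/
theorem condensed_of_condensed_restriction
    {G : Type*} [Group G] [Group.FG G] [Group.IsNilpotent G]
    (P : Set G) (hP : IsPositiveCone P)
    (C : Subgroup G) (hCnormal : C.Normal)
    (hconv : IsConvexIn P (C : Set G))
    (hfix : ∀ g : G, conjCone g (P \ ↑C) = P \ ↑C)
    (hlim : ∀ Fstar : Finset G, ↑Fstar ⊆ P ∩ ↑C →
      ∃ g : G, conjCone g (P ∩ ↑C) ≠ P ∩ ↑C ∧ ↑Fstar ⊆ conjCone g (P ∩ ↑C)) :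
    ∀ F : Finset G, ↑F ⊆ P →
      ∃ g : G, conjCone g P ≠ P ∧ ↑F ⊆ conjCone g P :=
  condensed_of_condensed_restriction_general P C hCnormal hfix hlim
end

section
/- For every n ≥ 1, the canonical action of L_n on the positive cones of ℤⁿ has no condensed points: for every positive cone P of ℤⁿ there exists a finite subset F ⊆ P such that every A ∈ L_n with F ⊆ A·P satisfies A·P = P. -/
/-- A positive cone of the free abelian group `ℤⁿ`. -/
def IsPosConeZ {n : ℕ} (P : Set (Fin n → ℤ)) : Prop :=
  (∀ a ∈ P, ∀ b ∈ P, a + b ∈ P) ∧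
  (∀ v : Fin n → ℤ, v ∈ P ∨ -v ∈ P ∨ v = 0) ∧
  (∀ v ∈ P, -v ∉ P) ∧
  (0 : Fin n → ℤ) ∉ P

/-- The image `A · P` of a subset `P ⊆ ℤⁿ` under a matrix `A`. -/
def mulVecSet {n : ℕ} (A : Matrix (Fin n) (Fin n) ℤ) (P : Set (Fin n → ℤ)) :
    Set (Fin n → ℤ) :=
  (fun w => A.mulVec w) '' P

/-- Membership in the group `L n ≤ SL n ℤ` of integer matrices agreeing with the identity
except possibly in the off-diagonal entries of the last row. -/
def IsLn {n : ℕ} (A : Matrix (Fin n) (Fin n) ℤ) : Prop :=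
  (∀ i, A i i = 1) ∧ ∀ i j : Fin n, i ≠ j → (i : ℕ) + 1 ≠ n → A i j = 0

/-!
An element of `L_n` acts on `ℤⁿ` as a transvection `v ↦ v + φ v • e` along `e = e_n`, where
`φ e = 0`. A positive cone `P` meets each fibre `v + ℤ e` in nothing, in everything, or in a
half-line `{v + t • e | m v ≤ t}`; in the last case call the fibre split. The transvection preserves
the first two kinds of fibres, so it preserves `P` as soon as `φ` vanishes on the split fibres.
These span a finitely generated subgroup. If the least points `±w + m (±w) • e` for `w` in a finite
generating set lie in the image of `P`, their preimages `±w + (m (±w) - φ (±w)) • e` lie in `P`,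
so `φ (±w) ≤ 0`, and `φ` vanishes on the whole span.
-/

open scoped Matrix Pointwise

section Shear

variable {n : ℕ}

def shear (φ : (Fin n → ℤ) →ₗ[ℤ] ℤ) (e : Fin n → ℤ) (v : Fin n → ℤ) : Fin n → ℤ :=
  v + φ v • e

variable {φ : (Fin n → ℤ) →ₗ[ℤ] ℤ} {e : Fin n → ℤ}

lemma shear_neg_neg : shear (-φ) (-e) = shear φ e := by
  funext v
  simp [shear]

lemma map_shear (hφe : φ e = 0) (v : Fin n → ℤ) : φ (shear φ e v) = φ v := by
  rw [shear, map_add, map_smul, hφe, smul_zero, add_zero]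

lemma shear_shear_neg (hφe : φ e = 0) (v : Fin n → ℤ) : shear φ e (shear (-φ) e v) = v := by
  have : φ (shear (-φ) e v) = φ v := by
    rw [shear, map_add, map_smul, hφe, smul_zero, add_zero]
  rw [shear, this, shear, LinearMap.neg_apply, neg_smul, neg_add_cancel_right]

end Shear

section Fibers

variable {n : ℕ} {P : Set (Fin n → ℤ)} {e : Fin n → ℤ}

def splitFibers (P : Set (Fin n → ℤ)) (e : Fin n → ℤ) : Set (Fin n → ℤ) :=
  {v | (∃ t : ℤ, v + t • e ∈ P) ∧ ∃ t : ℤ, v + t • e ∉ P}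

lemma add_smul_mem_of_le (hadd : ∀ a ∈ P, ∀ b ∈ P, a + b ∈ P) (he : e ∈ P) {v : Fin n → ℤ}
    {t s : ℤ} (hts : t ≤ s) (hv : v + t • e ∈ P) : v + s • e ∈ P := by
  induction s, hts using Int.leInduction with
  | base => exact hv
  | succ s _ ih => simpa [add_smul, add_assoc] using hadd _ ih _ he

lemma exists_fiber_inter_eq_Ici (hadd : ∀ a ∈ P, ∀ b ∈ P, a + b ∈ P) (he : e ∈ P)
    {v : Fin n → ℤ} (hv : v ∈ splitFibers P e) : ∃ m : ℤ, ∀ t, v + t • e ∈ P ↔ m ≤ t := by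
  obtain ⟨⟨t₁, ht₁⟩, ⟨t₀, ht₀⟩⟩ := hv
  have hbdd : ∀ t, v + t • e ∈ P → t₀ < t := fun t ht =>
    lt_of_not_ge fun hle => ht₀ (add_smul_mem_of_le hadd he hle ht)
  obtain ⟨m, hm, hmin⟩ := Int.exists_least_of_bdd ⟨t₀ + 1, hbdd⟩ ⟨t₁, ht₁⟩
  exact ⟨m, fun t => ⟨hmin t, fun hle => add_smul_mem_of_le hadd he hle hm⟩⟩

lemma neg_mem_splitFibers (hP : IsPosConeZ P) (he : e ∈ P) {v : Fin n → ℤ}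
    (hv : v ∈ splitFibers P e) : -v ∈ splitFibers P e := by
  obtain ⟨-, htri, hanti, -⟩ := hP
  obtain ⟨⟨t₁, ht₁⟩, ⟨t₀, ht₀⟩⟩ := hv
  have hneg : ∀ t : ℤ, -v + (-t) • e = -(v + t • e) := fun t => by rw [neg_smul, neg_add]
  refine ⟨?_, -t₁, by rw [hneg]; exact hanti _ ht₁⟩
  rcases htri (v + t₀ • e) with h | h | h
  · exact absurd h ht₀
  · exact ⟨-t₀, by rwa [hneg]⟩
  · refine ⟨-t₀ + 1, ?_⟩
    rwa [add_smul, one_smul, ← add_assoc, hneg, h, neg_zero, zero_add]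

lemma image_shear_subset {φ : (Fin n → ℤ) →ₗ[ℤ] ℤ} (hφ : ∀ v ∈ splitFibers P e, φ v = 0) :
    shear φ e '' P ⊆ P := by
  rintro _ ⟨p, hp, rfl⟩
  by_cases hpB : p ∈ splitFibers P e
  · simpa [shear, hφ p hpB] using hp
  · have hfibre : ∀ t : ℤ, p + t • e ∈ P := by
      by_contra! h
      exact hpB ⟨⟨0, by simpa using hp⟩, h⟩
    exact hfibre _

lemma image_shear_eq {φ : (Fin n → ℤ) →ₗ[ℤ] ℤ} (hφe : φ e = 0)
    (hφ : ∀ v ∈ splitFibers P e, φ v = 0) : shear φ e '' P = P := by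
  refine (image_shear_subset hφ).antisymm fun x hx => ⟨shear (-φ) e x, ?_, shear_shear_neg hφe x⟩
  exact image_shear_subset (fun v hv => by simp [hφ v hv]) ⟨x, hx, rfl⟩

lemma map_nonpos_of_add_smul_mem_image {φ : (Fin n → ℤ) →ₗ[ℤ] ℤ} (hφe : φ e = 0)
    {v : Fin n → ℤ} {m : ℤ} (hm : ∀ t, v + t • e ∈ P ↔ m ≤ t)
    (hmem : v + m • e ∈ shear φ e '' P) : φ v ≤ 0 := by
  obtain ⟨p, hp, hpv⟩ := hmem
  have hφp : φ p = φ v := by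
    have := congrArg φ hpv
    rwa [map_shear hφe, map_add, map_smul, hφe, smul_zero, add_zero] at this
  have hp' : p = v + (m - φ v) • e := by
    rw [sub_smul, ← hφp, ← add_sub_assoc, ← hpv, shear, add_sub_cancel_right]
  have := (hm _).mp (hp' ▸ hp)
  omega

theorem exists_finset_image_shear_eq_of_mem (hP : IsPosConeZ P) (he : e ∈ P) :
    ∃ F : Finset (Fin n → ℤ), ↑F ⊆ P ∧ ∀ φ : (Fin n → ℤ) →ₗ[ℤ] ℤ, φ e = 0 →
      ↑F ⊆ shear φ e '' P → shear φ e '' P = P := by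
  classical
  set B := splitFibers P e
  obtain ⟨T, hTB, hspan⟩ :=
    (Submodule.fg_span_iff_fg_span_finset_subset B).mp (IsNoetherian.noetherian (R := ℤ) _)
  have hST : ∀ w ∈ T ∪ -T, w ∈ B := by
    intro w hw
    rcases Finset.mem_union.mp hw with hw | hw
    · exact hTB hw
    · obtain ⟨y, hy, rfl⟩ := Finset.mem_neg.mp hw
      exact neg_mem_splitFibers hP he (hTB hy)
  choose! m hm using fun v (hv : v ∈ B) => exists_fiber_inter_eq_Ici hP.1 he hv
  refine ⟨(T ∪ -T).image fun w => w + m w • e, ?_, fun φ hφe hF => image_shear_eq hφe ?_⟩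
  · simp only [Finset.coe_image, Set.image_subset_iff]
    exact fun w hw => (hm w (hST w hw) _).mpr le_rfl
  have hmin : ∀ w ∈ T ∪ -T, φ w ≤ 0 := fun w hw =>
    map_nonpos_of_add_smul_mem_image hφe (hm w (hST w hw)) (hF (Finset.mem_image_of_mem _ hw))
  have hT : ∀ w ∈ T, φ w = 0 := fun w hw => by
    have h₁ := hmin w (Finset.mem_union_left _ hw)
    have h₂ := hmin (-w) (Finset.mem_union_right _ (Finset.neg_mem_neg hw))
    rw [map_neg] at h₂
    omega
  have hker : Submodule.span ℤ B ≤ LinearMap.ker φ := by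
    rw [hspan, Submodule.span_le]
    exact hT
  exact fun v hv => hker (Submodule.subset_span hv)

theorem exists_finset_image_shear_eq (hP : IsPosConeZ P) (he : e ≠ 0) :
    ∃ F : Finset (Fin n → ℤ), ↑F ⊆ P ∧ ∀ φ : (Fin n → ℤ) →ₗ[ℤ] ℤ, φ e = 0 →
      ↑F ⊆ shear φ e '' P → shear φ e '' P = P := by
  rcases hP.2.1 e with he' | he' | he'
  · exact exists_finset_image_shear_eq_of_mem hP he'
  · obtain ⟨F, hFP, hF⟩ := exists_finset_image_shear_eq_of_mem hP he'
    refine ⟨F, hFP, fun φ hφe => ?_⟩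
    simpa only [shear_neg_neg] using hF (-φ) (by simpa using hφe)
  · exact absurd he' he

end Fibers

lemma IsLn.row_eq_single {n : ℕ} {A : Matrix (Fin n) (Fin n) ℤ} (hA : IsLn A) {i : Fin n}
    (hi : (i : ℕ) + 1 ≠ n) : A i = Pi.single i 1 := by
  funext j
  rcases eq_or_ne j i with rfl | hji
  · simp [hA.1]
  · simp [hA.2 i j hji.symm hi, hji]

lemma IsLn.exists_mulVec_eq_shear {n : ℕ} {A : Matrix (Fin n) (Fin n) ℤ} (hA : IsLn A)
    {ℓ : Fin n} (hℓ : (ℓ : ℕ) + 1 = n) :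
    ∃ ψ : (Fin n → ℤ) →ₗ[ℤ] ℤ, ψ (Pi.single ℓ 1) = 0 ∧
      (fun v => A *ᵥ v) = shear ψ (Pi.single ℓ 1) := by
  refine ⟨LinearMap.proj ℓ ∘ₗ (A.mulVecLin - LinearMap.id), ?_, ?_⟩
  · simp [hA.1]
  funext v i
  rcases eq_or_ne i ℓ with rfl | hiℓ
  · simp [shear]
  · have hi : (i : ℕ) + 1 ≠ n := fun h => hiℓ (Fin.ext (by omega))
    simp [shear, hiℓ, Matrix.mulVec, hA.row_eq_single hi]

/-- The canonical action of `L n` on the positive cones of `ℤⁿ` has no condensed points. -/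
theorem Ln_action_no_condensed_points
    (n : ℕ) (hn : 1 ≤ n) (P : Set (Fin n → ℤ)) (hP : IsPosConeZ P) :
    ∃ F : Finset (Fin n → ℤ), ↑F ⊆ P ∧
      ∀ A : Matrix (Fin n) (Fin n) ℤ, IsLn A →
        ↑F ⊆ mulVecSet A P → mulVecSet A P = P := by
  set ℓ : Fin n := ⟨n - 1, by omega⟩
  have hℓ : (ℓ : ℕ) + 1 = n := by simp only [ℓ]; omega
  obtain ⟨F, hFP, hF⟩ := exists_finset_image_shear_eq hP (e := Pi.single ℓ 1) (by simp)
  refine ⟨F, hFP, fun A hA hFA => ?_⟩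
  obtain ⟨ψ, hψ, hAψ⟩ := IsLn.exists_mulVec_eq_shear hA hℓ
  rw [mulVecSet, hAψ] at hFA ⊢
  exact hF ψ hψ hFA
end

section
/- Let v = (x₁, …, xₙ) ∈ ℝⁿ with xₙ > 0, and let A ∈ L_n with A ≠ I_n. Then there exists an integer vector w ∈ ℤⁿ such that ⟨v, w⟩ > 0 but ⟨(A⁻¹)ᵗ v, w⟩ < 0, where (A⁻¹)ᵗ denotes the transpose of A⁻¹ and ⟨·,·⟩ is the standard Euclidean inner product on ℝⁿ. -/
/-!
An element of `L n` is `A = 1 + e aᵀ`, with `e` the last basis vector and `a` its last row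
minus `eᵀ`, so `aᵀ e = 0`; hence `A⁻¹ = 1 - e aᵀ` and
`⟨(A⁻¹)ᵀ v, w⟩ = ⟨v, A⁻¹ w⟩ = ⟨v, w⟩ - (aᵀ w) vₙ`.
Taking `w = 2a + m e`, with `m ∈ ℤ` chosen so that `⟨v, w⟩ ∈ (0, vₙ]`, gives
`aᵀ w = 2 |a|² ≥ 2`, so the second pairing is at most `vₙ - 2 vₙ < 0`.
-/

/-- The Euclidean inner product of a real vector with an integer vector. -/
def ipZ {n : ℕ} (v : Fin n → ℝ) (w : Fin n → ℤ) : ℝ := ∑ i, v i * (w i : ℝ)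

open Matrix

section ipZ

variable {n : ℕ} (v : Fin n → ℝ)

@[simp]
lemma ipZ_add (w w' : Fin n → ℤ) : ipZ v (w + w') = ipZ v w + ipZ v w' := by
  simp [ipZ, mul_add, Finset.sum_add_distrib]

@[simp]
lemma ipZ_sub (w w' : Fin n → ℤ) : ipZ v (w - w') = ipZ v w - ipZ v w' := by
  simp [ipZ, mul_sub, Finset.sum_sub_distrib]

@[simp]
lemma ipZ_smul (c : ℤ) (w : Fin n → ℤ) : ipZ v (c • w) = c * ipZ v w := by
  simp [ipZ, Finset.mul_sum, mul_left_comm]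

@[simp]
lemma ipZ_single (i : Fin n) (c : ℤ) : ipZ v (Pi.single i c) = v i * c := by
  simp [ipZ, Pi.single_apply]

lemma ipZ_transpose_map_mulVec (M : Matrix (Fin n) (Fin n) ℤ) (w : Fin n → ℤ) :
    ipZ ((M.map (Int.cast : ℤ → ℝ))ᵀ *ᵥ v) w = ipZ v (M *ᵥ w) := by
  have hcast :
      M.map (Int.castRingHom ℝ) *ᵥ (fun i => (w i : ℝ)) = fun i => ((M *ᵥ w) i : ℝ) :=
    funext fun i => (RingHom.map_mulVec (Int.castRingHom ℝ) M w i).symm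
  change (_ ⬝ᵥ _) = v ⬝ᵥ _
  rw [mulVec_transpose, ← dotProduct_mulVec]
  exact congrArg _ hcast

end ipZ

section vecMulVec

variable {ι R : Type*} [Fintype ι] [DecidableEq ι] [CommRing R]

lemma inv_one_add_vecMulVec {u a : ι → R} (h : a ⬝ᵥ u = 0) :
    (1 + vecMulVec u a)⁻¹ = 1 - vecMulVec u a := by
  refine inv_eq_right_inv ?_
  rw [mul_sub, mul_one, add_mul, one_mul, vecMulVec_mul_vecMulVec, h, zero_smul,
    vecMulVec_zero, add_zero, add_sub_cancel_right]

lemma inv_one_add_vecMulVec_mulVec {u a : ι → R} (h : a ⬝ᵥ u = 0) (w : ι → R) :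
    (1 + vecMulVec u a)⁻¹ *ᵥ w = w - (a ⬝ᵥ w) • u := by
  rw [inv_one_add_vecMulVec h, sub_mulVec, one_mulVec, vecMulVec_mulVec, op_smul_eq_smul]

end vecMulVec

namespace IsLn

variable {n : ℕ} {A : Matrix (Fin n) (Fin n) ℤ} {r : Fin n}

lemma eq_one_add_vecMulVec (hA : IsLn A) (hr : (r : ℕ) + 1 = n) :
    A = 1 + vecMulVec (Pi.single r 1) ((A - 1) r) := by
  ext i j
  by_cases hi : i = r
  · subst hi
    simp [vecMulVec_apply]
  · have hij : A i j = (1 : Matrix (Fin n) (Fin n) ℤ) i j := by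
      by_cases hij : i = j
      · subst hij
        simp [hA.1]
      · rw [one_apply_ne hij, hA.2 i j hij fun h => hi (Fin.ext (by omega))]
    simp [vecMulVec_apply, hi, hij]

lemma sub_one_apply_self (hA : IsLn A) : (A - 1) r r = 0 := by
  simp [hA.1]

lemma sub_one_row_ne_zero (hA : IsLn A) (hr : (r : ℕ) + 1 = n) (hA1 : A ≠ 1) :
    (A - 1) r ≠ 0 := by
  intro h
  apply hA1
  rw [hA.eq_one_add_vecMulVec hr, h, vecMulVec_zero, add_zero]

lemma mulVec_inv (hA : IsLn A) (hr : (r : ℕ) + 1 = n) (w : Fin n → ℤ) :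
    A⁻¹ *ᵥ w = w - ((A - 1) r ⬝ᵥ w) • Pi.single r 1 := by
  have h : (A - 1) r ⬝ᵥ Pi.single r 1 = 0 := by simp [hA.sub_one_apply_self]
  conv_lhs => rw [hA.eq_one_add_vecMulVec hr]
  exact inv_one_add_vecMulVec_mulVec h w

end IsLn

lemma exists_ipZ_pos_lt {n : ℕ} {v : Fin n → ℝ} {r : Fin n} (hv : 0 < v r)
    {a : Fin n → ℤ} (ha : a ≠ 0) (har : a r = 0) :
    ∃ w : Fin n → ℤ, 0 < ipZ v w ∧ ipZ v w < (a ⬝ᵥ w) * v r := by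
  obtain ⟨m, hm, -⟩ := existsUnique_add_zsmul_mem_Ioc hv (ipZ v (2 • a)) 0
  have haa : 1 ≤ a ⬝ᵥ a := (Fintype.sum_nonneg fun i => mul_self_nonneg (a i)).lt_of_ne'
    (dotProduct_self_eq_zero.not.mpr ha)
  rw [zero_add, Set.mem_Ioc, zsmul_eq_mul] at hm
  refine ⟨2 • a + Pi.single r m, ?_, ?_⟩
  · simpa [mul_comm] using hm.1
  · have h2 : 2 ≤ a ⬝ᵥ (2 • a + Pi.single r m) := by
      rw [dotProduct_add, dotProduct_smul, dotProduct_single, har, zero_mul, add_zero,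
        nsmul_eq_mul]
      omega
    have h2' : (2 : ℝ) ≤ (a ⬝ᵥ (2 • a + Pi.single r m) : ℤ) := by exact_mod_cast h2
    rw [ipZ_add, ipZ_single, mul_comm (v r)]
    nlinarith

/-- If `v ∈ ℝⁿ` has positive last coordinate and `A ∈ L n` is not the identity, then
there is an integer vector `w` with `⟨v, w⟩ > 0` but `⟨(A⁻¹)ᵗ v, w⟩ < 0`. -/
theorem exists_separating_integer_vector
    (n : ℕ) (hn : 1 ≤ n) (v : Fin n → ℝ) (hv : 0 < v ⟨n - 1, by omega⟩)
    (A : Matrix (Fin n) (Fin n) ℤ) (hA : IsLn A) (hA1 : A ≠ 1) :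
    ∃ w : Fin n → ℤ,
      0 < ipZ v w ∧
      ipZ ((Matrix.transpose (A⁻¹.map (fun z => (z : ℝ)))).mulVec v) w < 0 := by
  have hr : ((⟨n - 1, by omega⟩ : Fin n) : ℕ) + 1 = n := by simp only; omega
  obtain ⟨w, hpos, hlt⟩ :=
    exists_ipZ_pos_lt hv (hA.sub_one_row_ne_zero hr hA1) hA.sub_one_apply_self
  refine ⟨w, hpos, ?_⟩
  rw [ipZ_transpose_map_mulVec, hA.mulVec_inv hr, ipZ_sub, ipZ_smul, ipZ_single, Int.cast_one,
    mul_one]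
  linarith
end

section
/- Let G be a finitely generated torsion-free nilpotent group such that the commutator subgroup [G,G] is cyclic and contained in the center Z(G). Then there exists g₀ ∈ G such that [G,G] ⊆ ⟨g₀⟩, the cyclic subgroup ⟨g₀⟩ is contained in Z(G), and the quotient group G/⟨g₀⟩ is a finitely generated torsion-free abelian group. -/
/-!
Let `I` be the isolator of `[G,G]`, the set of elements some positive power of which lies in
`[G,G]`. Since commutators are central, `⁅x ^ n, y⁆ = ⁅x, y⁆ ^ n`, so torsion-freeness forces `I`
into the centre. The image of `I` in the abelianization is its torsion subgroup, which is finite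
because the abelianization is finitely generated; if `e` is its exponent, `x ↦ x ^ e` embeds the
abelian group `I` into the cyclic group `[G,G]`, so `I = ⟨g₀⟩`. Finally `G ⧸ I` is abelian since
`[G,G] ≤ I`, and torsion-free since `I` is isolated.
-/

/-- The former Mathlib definition (removed since): no nontrivial element has finite order. -/
def Monoid.IsTorsionFree (G : Type*) [Monoid G] : Prop :=
  ∀ g : G, g ≠ 1 → ¬IsOfFinOrder g

theorem Monoid.IsTorsionFree.eq_one_of_pow_eq_one {M : Type*} [Monoid M]
    (htf : Monoid.IsTorsionFree M) {x : M} {n : ℕ} (hn : n ≠ 0) (hx : x ^ n = 1) : x = 1 :=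
  by_contra fun hne ↦ htf x hne (isOfFinOrder_iff_pow_eq_one.mpr ⟨n, Nat.pos_of_ne_zero hn, hx⟩)

instance Subgroup.fg_of_commGroup {A : Type*} [CommGroup A] [Group.FG A] (H : Subgroup A) :
    Group.FG H := by
  have : Module.Finite ℤ (Additive A) := Module.Finite.iff_addGroup_fg.mpr inferInstance
  have hfg : (AddSubgroup.toIntSubmodule H.toAddSubgroup).FG := IsNoetherian.noetherian _
  rw [Group.fg_iff_subgroup_fg, Subgroup.fg_iff_add_fg]
  exact (Submodule.fg_iff_addSubgroup_fg _).mp hfg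

theorem CommGroup.exists_pow_eq_one_of_mem_torsion (A : Type*) [CommGroup A] [Group.FG A] :
    ∃ e ≠ 0, ∀ a ∈ CommGroup.torsion A, a ^ e = 1 := by
  have : Finite (CommGroup.torsion A) :=
    CommGroup.finite_of_fg_isMulTorsion _ fun t ↦ Submonoid.isOfFinOrder_coe.mp t.2
  exact ⟨Monoid.exponent (CommGroup.torsion A), Monoid.exponent_ne_zero_of_finite,
    fun a ha ↦ congrArg Subtype.val (Monoid.pow_exponent_eq_one (⟨a, ha⟩ : CommGroup.torsion A))⟩

section

open scoped commutatorElement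

variable {G : Type*} [Group G]

theorem commutatorElement_pow_left_of_commute {x y : G} (h : Commute x ⁅x, y⁆) (n : ℕ) :
    ⁅x ^ n, y⁆ = ⁅x, y⁆ ^ n := by
  induction n with
  | zero => simp
  | succ n ih =>
    calc ⁅x ^ (n + 1), y⁆ = x * ⁅x ^ n, y⁆ * x⁻¹ * ⁅x, y⁆ := by
          simp only [commutatorElement_def]; group
      _ = ⁅x, y⁆ ^ (n + 1) := by rw [ih, (h.pow_right n).mul_inv_cancel, pow_succ]

variable (G) in
def commutatorIsolator : Subgroup G :=
  (CommGroup.torsion (Abelianization G)).comap Abelianization.of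

instance : (commutatorIsolator G).Normal := Subgroup.normal_comap _

theorem mem_commutatorIsolator {x : G} :
    x ∈ commutatorIsolator G ↔ ∃ n, 0 < n ∧ x ^ n ∈ commutator G := by
  simp only [commutatorIsolator, Subgroup.mem_comap, CommGroup.mem_torsion,
    isOfFinOrder_iff_pow_eq_one, ← map_pow, ← MonoidHom.mem_ker, Abelianization.ker_of]

theorem commutator_le_commutatorIsolator : commutator G ≤ commutatorIsolator G :=
  fun x hx ↦ mem_commutatorIsolator.mpr ⟨1, one_pos, by rwa [pow_one]⟩

theorem mem_commutatorIsolator_of_pow_mem {x : G} {n : ℕ} (hn : 0 < n)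
    (hx : x ^ n ∈ commutatorIsolator G) : x ∈ commutatorIsolator G := by
  obtain ⟨m, hm, hxm⟩ := mem_commutatorIsolator.mp hx
  exact mem_commutatorIsolator.mpr ⟨n * m, Nat.mul_pos hn hm, by rwa [pow_mul]⟩

theorem isTorsionFree_quotient_commutatorIsolator :
    Monoid.IsTorsionFree (G ⧸ commutatorIsolator G) := by
  intro q hq hfin
  obtain ⟨x, rfl⟩ := QuotientGroup.mk_surjective q
  obtain ⟨n, hn, hxn⟩ := isOfFinOrder_iff_pow_eq_one.mp hfin
  rw [← QuotientGroup.mk_pow, QuotientGroup.eq_one_iff] at hxn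
  exact hq ((QuotientGroup.eq_one_iff x).mpr (mem_commutatorIsolator_of_pow_mem hn hxn))

theorem commutatorIsolator_le_center (htf : Monoid.IsTorsionFree G)
    (hcen : commutator G ≤ Subgroup.center G) : commutatorIsolator G ≤ Subgroup.center G := by
  intro x hx
  obtain ⟨n, hn, hxn⟩ := mem_commutatorIsolator.mp hx
  rw [Subgroup.mem_center_iff]
  intro y
  have hxy_central : ⁅x, y⁆ ∈ Subgroup.center G :=
    hcen (Subgroup.commutator_mem_commutator (Subgroup.mem_top x) (Subgroup.mem_top y))
  have hpow : ⁅x, y⁆ ^ n = 1 := by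
    rw [← commutatorElement_pow_left_of_commute (Subgroup.mem_center_iff.mp hxy_central x),
      commutatorElement_eq_one_iff_mul_comm]
    exact (Subgroup.mem_center_iff.mp (hcen hxn) y).symm
  exact ((commutatorElement_eq_one_iff_mul_comm).mp (htf.eq_one_of_pow_eq_one hn.ne' hpow)).symm

theorem exists_pow_mem_commutator_of_mem_commutatorIsolator [Group.FG G] :
    ∃ e ≠ 0, ∀ x ∈ commutatorIsolator G, x ^ e ∈ commutator G := by
  have : Group.FG (Abelianization G) := QuotientGroup.fg (commutator G)
  obtain ⟨e, he, hpow⟩ := CommGroup.exists_pow_eq_one_of_mem_torsion (Abelianization G)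
  refine ⟨e, he, fun x hx ↦ ?_⟩
  rw [← Abelianization.ker_of, MonoidHom.mem_ker, map_pow]
  exact hpow _ hx

theorem isCyclic_commutatorIsolator [Group.FG G] [IsCyclic (commutator G)]
    (htf : Monoid.IsTorsionFree G) (hcen : commutator G ≤ Subgroup.center G) :
    IsCyclic (commutatorIsolator G) := by
  obtain ⟨e, he, hpow⟩ := exists_pow_mem_commutator_of_mem_commutatorIsolator (G := G)
  let powE : commutatorIsolator G →* commutator G :=
    { toFun x := ⟨x ^ e, hpow x x.2⟩
      map_one' := by simp
      map_mul' x y := Subtype.ext <| Commute.mul_pow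
        (Subgroup.mem_center_iff.mp (commutatorIsolator_le_center htf hcen y.2) x) e }
  refine isCyclic_of_injective powE ((injective_iff_map_eq_one powE).mpr fun x hx ↦ ?_)
  exact Subtype.ext (htf.eq_one_of_pow_eq_one he (congrArg Subtype.val hx))

end

theorem exists_central_cyclic_with_torsionFree_abelian_quotient_general
    {G : Type*} [Group G] [Group.FG G]
    (htf : Monoid.IsTorsionFree G)
    (hcyc : ∃ g : G, commutator G = Subgroup.zpowers g)
    (hcen : commutator G ≤ Subgroup.center G) :
    ∃ g₀ : G,
      commutator G ≤ Subgroup.zpowers g₀ ∧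
      Subgroup.zpowers g₀ ≤ Subgroup.center G ∧
      ∃ _ : (Subgroup.zpowers g₀).Normal,
        Group.FG (G ⧸ Subgroup.zpowers g₀) ∧
        Monoid.IsTorsionFree (G ⧸ Subgroup.zpowers g₀) ∧
        ∀ x y : G ⧸ Subgroup.zpowers g₀, x * y = y * x := by
  obtain ⟨g, hg⟩ := hcyc
  have : IsCyclic (commutator G) := hg ▸ Subgroup.isCyclic_zpowers g
  obtain ⟨g₀, hg₀⟩ := (Subgroup.isCyclic_iff_exists_zpowers_eq_top _).mp
    (isCyclic_commutatorIsolator htf hcen)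
  refine ⟨g₀, ?_⟩
  rw [hg₀]
  have hcomm : IsMulCommutative (G ⧸ commutatorIsolator G) :=
    Subgroup.Normal.quotient_commutative_iff_commutator_le.mpr commutator_le_commutatorIsolator
  exact ⟨commutator_le_commutatorIsolator, commutatorIsolator_le_center htf hcen, inferInstance,
    inferInstance, isTorsionFree_quotient_commutatorIsolator, hcomm.is_comm.comm⟩

/-- If `G` is a finitely generated torsion-free nilpotent group whose commutator subgroup
is cyclic and central, then there is a central element `g₀` with `[G,G] ⊆ ⟨g₀⟩` such that
`G/⟨g₀⟩` is a finitely generated torsion-free abelian group. -/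
theorem exists_central_cyclic_with_torsionFree_abelian_quotient
    {G : Type*} [Group G] [Group.FG G] [Group.IsNilpotent G]
    (htf : Monoid.IsTorsionFree G)
    (hcyc : ∃ g : G, commutator G = Subgroup.zpowers g)
    (hcen : commutator G ≤ Subgroup.center G) :
    ∃ g₀ : G,
      commutator G ≤ Subgroup.zpowers g₀ ∧
      Subgroup.zpowers g₀ ≤ Subgroup.center G ∧
      ∃ _ : (Subgroup.zpowers g₀).Normal,
        Group.FG (G ⧸ Subgroup.zpowers g₀) ∧
        Monoid.IsTorsionFree (G ⧸ Subgroup.zpowers g₀) ∧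
        ∀ x y : G ⧸ Subgroup.zpowers g₀, x * y = y * x :=
  exists_central_cyclic_with_torsionFree_abelian_quotient_general htf hcyc hcen
end

section
/- For every k ≥ 1, let ι : N_k → N_{k+1} be the injective group homomorphism sending a matrix B to the block matrix (B 0; 0 1). Then there exists a positive cone Q of N_{k+1} such that the image ι(N_k) is a convex subgroup of N_{k+1} with respect to Q. -/
open Matrix

/-- The pattern of a lower unitriangular matrix: ones on the diagonal and zeros above
the diagonal. -/
def IsUniLower (k : ℕ) (M : Matrix (Fin k) (Fin k) ℤ) : Prop :=
  (∀ i, M i i = 1) ∧ ∀ i j : Fin k, i < j → M i j = 0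

namespace IsUniLower

variable {k : ℕ}

lemma one (k : ℕ) : IsUniLower k 1 := by
  constructor
  · intro i; simp
  · intro i j hij; exact Matrix.one_apply_ne (Fin.ne_of_lt hij)

lemma mul {M N : Matrix (Fin k) (Fin k) ℤ}
    (hM : IsUniLower k M) (hN : IsUniLower k N) : IsUniLower k (M * N) := by
  constructor
  · intro i
    rw [Matrix.mul_apply, Finset.sum_eq_single i]
    · rw [hM.1, hN.1, one_mul]
    · intro l _ hl
      rcases lt_or_gt_of_ne hl with h | h
      · rw [hN.2 l i h, mul_zero]
      · rw [hM.2 i l h, zero_mul]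
    · intro hi; exact absurd (Finset.mem_univ i) hi
  · intro i j hij
    rw [Matrix.mul_apply, Finset.sum_eq_zero]
    intro l _
    rcases lt_or_ge i l with h | h
    · rw [hM.2 i l h, zero_mul]
    · rw [hN.2 l j (lt_of_le_of_lt h hij), mul_zero]

lemma pow_strictLower {X : Matrix (Fin k) (Fin k) ℤ}
    (hX : ∀ i j : Fin k, (i : ℕ) ≤ (j : ℕ) → X i j = 0) :
    ∀ m : ℕ, ∀ i j : Fin k, (i : ℕ) < (j : ℕ) + m → (X ^ m) i j = 0 := by
  intro m
  induction m with
  | zero =>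
    intro i j hij
    rw [pow_zero]
    exact Matrix.one_apply_ne (by intro h; subst h; omega)
  | succ m ih =>
    intro i j hij
    rw [pow_succ, Matrix.mul_apply, Finset.sum_eq_zero]
    intro l _
    rcases le_or_gt (l : ℕ) (j : ℕ) with h | h
    · rw [hX l j h, mul_zero]
    · rw [ih i l (by omega), zero_mul]

lemma pow_eq_zero {X : Matrix (Fin k) (Fin k) ℤ}
    (hX : ∀ i j : Fin k, (i : ℕ) ≤ (j : ℕ) → X i j = 0) : X ^ k = 0 := by
  ext i j
  rw [Matrix.zero_apply]
  exact pow_strictLower hX k i j (by have := i.isLt; omega)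

end IsUniLower

/-- The group `N_k` of `k × k` lower triangular integer matrices with all diagonal
entries equal to `1`, realized as a subgroup of the units of the matrix ring. -/
def Nk (k : ℕ) : Subgroup (Matrix (Fin k) (Fin k) ℤ)ˣ where
  carrier := {U | IsUniLower k U.val}
  one_mem' := IsUniLower.one k
  mul_mem' hA hB := IsUniLower.mul hA hB
  inv_mem' := by
    intro U hU
    replace hU : IsUniLower k U.val := hU
    set M : Matrix (Fin k) (Fin k) ℤ := U.val with hMdef
    set X : Matrix (Fin k) (Fin k) ℤ := M - 1 with hXdef
    have hX : ∀ i j : Fin k, (i : ℕ) ≤ (j : ℕ) → X i j = 0 := by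
      intro i j hij
      rcases eq_or_lt_of_le hij with h | h
      · have : i = j := Fin.ext h
        subst this
        simp [hXdef, Matrix.sub_apply, hU.1 i]
      · have hij' : i < j := h
        have hne : i ≠ j := Fin.ne_of_lt hij'
        simp [hXdef, Matrix.sub_apply, hU.2 i j hij', Matrix.one_apply_ne hne]
    have hXneg : ∀ i j : Fin k, (i : ℕ) ≤ (j : ℕ) → (-X) i j = 0 := by
      intro i j hij; simp [hX i j hij]
    have hpow : (-X) ^ k = 0 := IsUniLower.pow_eq_zero hXneg
    set N : Matrix (Fin k) (Fin k) ℤ := ∑ j ∈ Finset.range k, (-X) ^ j with hNdef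
    have hMX : M = X + 1 := by rw [hXdef]; abel
    have hNM : N * M = 1 := by
      have h1 : N * (-X - 1) = (-X) ^ k - 1 := geom_sum_mul (-X) k
      rw [hpow] at h1
      have h2 : N * (-X - 1) = -(N * M) := by rw [hMX]; noncomm_ring
      rw [h2] at h1
      have := congrArg Neg.neg h1
      simpa using this
    have hMN : M * N = 1 := by
      have h1 : (-X - 1) * N = (-X) ^ k - 1 := mul_geom_sum (-X) k
      rw [hpow] at h1
      have h2 : (-X - 1) * N = -(M * N) := by rw [hMX]; noncomm_ring
      rw [h2] at h1
      have := congrArg Neg.neg h1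
      simpa using this
    have hinv : (U⁻¹).val = N := Units.inv_eq_of_mul_eq_one_right hMN
    show IsUniLower k _
    rw [hinv]
    constructor
    · intro i
      have hk : 0 < k := i.pos
      rw [hNdef, Matrix.sum_apply, Finset.sum_eq_single 0]
      · simp
      · intro m hm hm0
        exact IsUniLower.pow_strictLower hXneg m i i (by omega)
      · intro h; exact absurd (Finset.mem_range.mpr hk) h
    · intro i j hij
      rw [hNdef, Matrix.sum_apply, Finset.sum_eq_zero]
      intro m _
      exact IsUniLower.pow_strictLower hXneg m i j (by have : (i:ℕ) < (j:ℕ) := hij; omega)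

/-- The block-diagonal embedding `B ↦ (B 0; 0 1)` of `k × k` matrices into
`(k+1) × (k+1)` matrices. -/
def embMat (k : ℕ) (M : Matrix (Fin k) (Fin k) ℤ) :
    Matrix (Fin (k + 1)) (Fin (k + 1)) ℤ :=
  Matrix.of fun i j =>
    if h : (i : ℕ) < k ∧ (j : ℕ) < k then M ⟨i, h.1⟩ ⟨j, h.2⟩
    else if i = j then 1 else 0

/-! The last row `r(g)` of `g ∈ N_{k+1}` (off the diagonal) is a crossed homomorphism,
`r(gh) = r(g) B(h) + r(h)` with `B(h)` the upper-left `k × k` block of `h`, and right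
multiplication by a lower unitriangular matrix preserves the colexicographic sign of a row vector
(it does not change the last nonzero entry). So the elements with colex-positive last row form a
relative cone for `ι(N_k) = {g | r(g) = 0}`. Adding to it a positive cone of `N_k`, which exists by
induction on `k`, gives a positive cone of `N_{k+1}`. The subgroup `ι(N_k)` is convex for it:
if `g ≤ f ≤ h` with `g, h ∈ ι(N_k)` and `f ∉ ι(N_k)`, then `g⁻¹f` and `f⁻¹h` are relatively
positive, hence so is their product `g⁻¹h ∈ ι(N_k)`, which is impossible. -/

section RelativeCone

variable {G : Type*} [Group G]

/-- Equivalently, `S = {g | C < g • C}` for a `G`-invariant linear order on `G ⧸ C`. -/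
structure IsRelativeCone (C : Subgroup G) (S : Set G) : Prop where
  mul_mem : ∀ a ∈ S, ∀ b ∈ S, a * b ∈ S
  notMem_subgroup : ∀ a ∈ S, a ∉ C
  subgroup_mul_mem : ∀ c ∈ C, ∀ a ∈ S, c * a ∈ S
  mul_subgroup_mem : ∀ a ∈ S, ∀ c ∈ C, a * c ∈ S
  mem_or_inv_mem : ∀ g ∉ C, g ∈ S ∨ g⁻¹ ∈ S

namespace IsRelativeCone

variable {C : Subgroup G} {S : Set G}

theorem isPositiveCone_union (hS : IsRelativeCone C S) {P : Set C} (hP : IsPositiveCone P) :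
    IsPositiveCone (S ∪ (↑) '' P) := by
  obtain ⟨hPmul, hPtot, hPinv, hP1⟩ := hP
  refine ⟨?_, fun g => ?_, ?_, ?_⟩
  · rintro a (ha | ⟨a, ha, rfl⟩) b (hb | ⟨b, hb, rfl⟩)
    · exact .inl (hS.mul_mem a ha b hb)
    · exact .inl (hS.mul_subgroup_mem a ha b b.2)
    · exact .inl (hS.subgroup_mul_mem a a.2 b hb)
    · exact .inr ⟨a * b, hPmul a ha b hb, rfl⟩
  · by_cases hg : g ∈ C
    · rcases hPtot ⟨g, hg⟩ with h | h | h
      · exact .inl (.inr ⟨_, h, rfl⟩)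
      · exact .inr (.inl (.inr ⟨_, h, rfl⟩))
      · exact .inr (.inr (congrArg Subtype.val h))
    · rcases hS.mem_or_inv_mem g hg with h | h
      · exact .inl (.inl h)
      · exact .inr (.inl (.inl h))
  · rintro g (hg | ⟨a, ha, rfl⟩) (hg' | ⟨b, hb, hba⟩)
    · exact hS.notMem_subgroup _ (hS.mul_mem g hg _ hg') (by simp [C.one_mem])
    · exact hS.notMem_subgroup g hg (C.inv_mem_iff.mp (hba ▸ b.2))
    · exact hS.notMem_subgroup _ hg' (C.inv_mem a.2)
    · exact hPinv a ha ((Subtype.ext hba : b = a⁻¹) ▸ hb)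
  · rintro (h | ⟨a, ha, h⟩)
    · exact hS.notMem_subgroup 1 h C.one_mem
    · exact hP1 ((Subtype.ext h : a = 1) ▸ ha)

theorem isConvexIn_union (hS : IsRelativeCone C S) (P : Set C) :
    IsConvexIn (S ∪ (↑) '' P) C := by
  intro g hg h hh f hgf hfh
  by_contra hf
  have mem_S : ∀ x, x ∉ C → (x ∈ S ∪ (↑) '' P ∨ x = 1) → x ∈ S := by
    rintro x hx ((hxS | ⟨y, -, rfl⟩) | rfl)
    exacts [hxS, absurd y.2 hx, absurd C.one_mem hx]
  have hgf' := mem_S _ (fun h' => hf (by simpa using C.mul_mem hg h')) hgf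
  have hfh' := mem_S _ (fun h' => hf (by simpa using C.mul_mem hh (C.inv_mem h'))) hfh
  exact hS.notMem_subgroup _ (by simpa [mul_assoc] using hS.mul_mem _ hgf' _ hfh')
    (C.mul_mem (C.inv_mem hg) hh)

end IsRelativeCone

theorem IsPositiveCone.preimage {H : Type*} [Group H] {f : G →* H} (hf : Function.Injective f)
    {P : Set H} (hP : IsPositiveCone P) : IsPositiveCone (f ⁻¹' P) := by
  obtain ⟨hPmul, hPtot, hPinv, hP1⟩ := hP
  refine ⟨fun a ha b hb => ?_, fun g => ?_, fun g hg hg' => ?_, ?_⟩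
  · simpa using hPmul _ ha _ hb
  · rcases hPtot (f g) with h | h | h
    exacts [.inl h, .inr (.inl (by simpa using h)), .inr (.inr (hf (by simpa using h)))]
  · exact hPinv _ hg (by simpa using hg')
  · simpa using hP1

theorem isPositiveCone_empty [Subsingleton G] : IsPositiveCone (∅ : Set G) :=
  ⟨by simp, fun g => .inr (.inr (Subsingleton.elim g 1)), by simp, by simp⟩

end RelativeCone

namespace Pi.Colex
variable {ι : Type*} {α : ι → Type*} [LinearOrder ι]

instance isOrderedCancelAddMonoid [∀ i, AddCommMonoid (α i)] [∀ i, PartialOrder (α i)]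
    [∀ i, IsOrderedCancelAddMonoid (α i)] :
    IsOrderedCancelAddMonoid (Colex (∀ i, α i)) where
  add_le_add_left _ _ hxy z :=
    hxy.elim (fun hxyz => hxyz ▸ le_rfl) fun ⟨i, hi⟩ =>
      Or.inr ⟨i, fun j hji => congr_arg (· + z j) (hi.1 j hji), add_lt_add_left hi.2 _⟩
  le_of_add_le_add_left _ _ _ hxyz :=
    hxyz.elim (fun h => (add_left_cancel h).le) fun ⟨i, hi⟩ =>
      Or.inr ⟨i, fun j hj => (add_left_cancel <| hi.1 j hj), lt_of_add_lt_add_left hi.2⟩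

end Pi.Colex

theorem IsUniLower.toColex_vecMul_pos {k : ℕ} {B : Matrix (Fin k) (Fin k) ℤ}
    (hB : IsUniLower k B) {v : Fin k → ℤ} (hv : 0 < toColex v) : 0 < toColex (v ᵥ* B) := by
  obtain ⟨i, hzero, hpos⟩ := hv
  have hv_gt : ∀ l, i < l → v l = 0 := fun l hl => (hzero l hl).symm
  refine ⟨i, fun j hj => ?_, ?_⟩
  · show 0 = ∑ l, v l * B l j
    refine (Finset.sum_eq_zero fun l _ => ?_).symm
    rcases le_or_gt l i with hl | hl
    · rw [hB.2 l j (hl.trans_lt hj), mul_zero]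
    · rw [hv_gt l hl, zero_mul]
  · show 0 < ∑ l, v l * B l i
    rw [Finset.sum_eq_single i (fun l _ hl => ?_) (by simp), hB.1, mul_one]
    · exact hpos
    rcases hl.lt_or_gt with hl | hl
    · rw [hB.2 l i hl, mul_zero]
    · rw [hv_gt l hl, zero_mul]

theorem embMat_last_castSucc {k : ℕ} (M : Matrix (Fin k) (Fin k) ℤ) (j : Fin k) :
    embMat k M (Fin.last k) j.castSucc = 0 := by
  simp [embMat, (Fin.castSucc_lt_last j).ne']

theorem embMat_castSucc_castSucc {k : ℕ} (M : Matrix (Fin k) (Fin k) ℤ) (i j : Fin k) :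
    embMat k M i.castSucc j.castSucc = M i j := by
  simp [embMat]

namespace Nk

variable {k : ℕ}

def lastRow (g : Nk (k + 1)) : Fin k → ℤ := fun j => g.1.1 (Fin.last k) j.castSucc

def topLeft (g : Nk (k + 1)) : Matrix (Fin k) (Fin k) ℤ :=
  g.1.1.submatrix Fin.castSucc Fin.castSucc

theorem isUniLower_topLeft (g : Nk (k + 1)) : IsUniLower k (topLeft g) :=
  ⟨fun i => g.2.1 i.castSucc, fun i j hij => g.2.2 i.castSucc j.castSucc (by simpa using hij)⟩

@[simp]
theorem topLeft_one : topLeft (1 : Nk (k + 1)) = 1 :=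
  Matrix.submatrix_one _ (Fin.castSucc_injective k)

@[simp]
theorem lastRow_one : lastRow (1 : Nk (k + 1)) = 0 :=
  funext fun j => Matrix.one_apply_ne (Fin.castSucc_lt_last j).ne'

theorem topLeft_mul (g h : Nk (k + 1)) : topLeft (g * h) = topLeft g * topLeft h := by
  ext i j
  change (g.1.1 * h.1.1) i.castSucc j.castSucc = _
  rw [Matrix.mul_apply, Fin.sum_univ_castSucc, g.2.2 _ _ (Fin.castSucc_lt_last i), zero_mul,
    add_zero]
  rfl

theorem lastRow_mul (g h : Nk (k + 1)) :
    lastRow (g * h) = lastRow g ᵥ* topLeft h + lastRow h := by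
  ext j
  change (g.1.1 * h.1.1) (Fin.last k) j.castSucc = _
  rw [Matrix.mul_apply, Fin.sum_univ_castSucc, g.2.1, one_mul]
  rfl

theorem lastRow_inv (g : Nk (k + 1)) : lastRow g⁻¹ = -lastRow g ᵥ* topLeft g⁻¹ := by
  have h := lastRow_mul g g⁻¹
  rw [mul_inv_cancel, lastRow_one, eq_comm] at h
  rw [Matrix.neg_vecMul, eq_neg_of_add_eq_zero_right h]

def topLeftHom : Nk (k + 1) →* Nk k where
  toFun g := ⟨⟨topLeft g, topLeft g⁻¹, by rw [← topLeft_mul, mul_inv_cancel, topLeft_one],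
    by rw [← topLeft_mul, inv_mul_cancel, topLeft_one]⟩, isUniLower_topLeft g⟩
  map_one' := Subtype.ext (Units.ext topLeft_one)
  map_mul' g h := Subtype.ext (Units.ext (topLeft_mul g h))

theorem ext_of_lastRow_topLeft {g h : Nk (k + 1)} (hrow : lastRow g = lastRow h)
    (htop : topLeft g = topLeft h) : g = h := by
  refine Subtype.ext (Units.ext (Matrix.ext fun i j => ?_))
  induction i using Fin.lastCases with
  | last =>
    induction j using Fin.lastCases with
    | last => rw [g.2.1, h.2.1]
    | cast j => exact congrFun hrow j
  | cast i =>
    induction j using Fin.lastCases with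
    | last => rw [g.2.2 _ _ (Fin.castSucc_lt_last i), h.2.2 _ _ (Fin.castSucc_lt_last i)]
    | cast j => exact congrFun (congrFun htop i) j

def lastRowKer (k : ℕ) : Subgroup (Nk (k + 1)) where
  carrier := {g | lastRow g = 0}
  one_mem' := lastRow_one
  mul_mem' {g h} (hg : lastRow g = 0) (hh : lastRow h = 0) := by
    change lastRow (g * h) = 0
    rw [lastRow_mul, hg, hh, Matrix.zero_vecMul, add_zero]
  inv_mem' {g} (hg : lastRow g = 0) := by
    change lastRow g⁻¹ = 0
    rw [lastRow_inv, hg, neg_zero, Matrix.zero_vecMul]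

theorem isRelativeCone_lastRow_pos :
    IsRelativeCone (lastRowKer k) {g | 0 < toColex (lastRow g)} where
  mul_mem a (ha : 0 < toColex (lastRow a)) b (hb : 0 < toColex (lastRow b)) := by
    change 0 < toColex (lastRow (a * b))
    rw [lastRow_mul]
    exact add_pos ((isUniLower_topLeft b).toColex_vecMul_pos ha) hb
  notMem_subgroup a (ha : 0 < toColex (lastRow a)) (hC : lastRow a = 0) :=
    ha.ne' (congrArg toColex hC)
  subgroup_mul_mem c (hc : lastRow c = 0) a (ha : 0 < toColex (lastRow a)) := by
    change 0 < toColex (lastRow (c * a))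
    rwa [lastRow_mul, hc, Matrix.zero_vecMul, zero_add]
  mul_subgroup_mem a (ha : 0 < toColex (lastRow a)) c (hc : lastRow c = 0) := by
    change 0 < toColex (lastRow (a * c))
    rw [lastRow_mul, hc, add_zero]
    exact (isUniLower_topLeft c).toColex_vecMul_pos ha
  mem_or_inv_mem g (hg : lastRow g ≠ 0) := by
    rcases lt_trichotomy (toColex (lastRow g)) 0 with h | h | h
    · right
      change 0 < toColex (lastRow g⁻¹)
      rw [lastRow_inv]
      exact (isUniLower_topLeft g⁻¹).toColex_vecMul_pos (neg_pos.mpr h)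
    · exact absurd h hg
    · exact .inl h

theorem injective_topLeftHom_comp_subtype :
    Function.Injective (topLeftHom.comp (lastRowKer k).subtype) := fun g h hgh =>
  Subtype.ext <|
    ext_of_lastRow_topLeft (g.2.trans h.2.symm) (congrArg (fun x : Nk k => x.1.1) hgh)

theorem exists_isPositiveCone_isConvexIn_lastRowKer {P : Set (Nk k)} (hP : IsPositiveCone P) :
    ∃ Q : Set (Nk (k + 1)), IsPositiveCone Q ∧ IsConvexIn Q (lastRowKer k) :=
  ⟨_, isRelativeCone_lastRow_pos.isPositiveCone_union
    (hP.preimage injective_topLeftHom_comp_subtype), isRelativeCone_lastRow_pos.isConvexIn_union _⟩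

theorem exists_isPositiveCone : ∀ k, ∃ P : Set (Nk k), IsPositiveCone P
  | 0 => ⟨∅, isPositiveCone_empty⟩
  | k + 1 =>
    let ⟨_, hP⟩ := exists_isPositiveCone k
    let ⟨Q, hQ, _⟩ := exists_isPositiveCone_isConvexIn_lastRowKer hP
    ⟨Q, hQ⟩

theorem range_eq_lastRowKer {ι : Nk k →* Nk (k + 1)}
    (hι : ∀ B : Nk k, (ι B).1.1 = embMat k B.1.1) : ι.range = lastRowKer k := by
  have lastRow_ι (B : Nk k) : lastRow (ι B) = 0 := funext fun j => by
    simp only [lastRow, hι, embMat_last_castSucc, Pi.zero_apply]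
  ext g
  refine ⟨fun ⟨B, hB⟩ => hB ▸ lastRow_ι B, fun hg => ⟨topLeftHom g, ?_⟩⟩
  refine ext_of_lastRow_topLeft ((lastRow_ι _).trans hg.symm) ?_
  ext i j
  simp only [topLeft, Matrix.submatrix_apply, hι, embMat_castSucc_castSucc]
  rfl

end Nk

theorem image_Nk_convex_in_Nk_succ_general (k : ℕ)
    (ι : ↥(Nk k) →* ↥(Nk (k + 1)))
    (hι : ∀ B : ↥(Nk k), ((ι B : ↥(Nk (k + 1))) : (Matrix (Fin (k + 1)) (Fin (k + 1)) ℤ)ˣ).val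
      = embMat k ((B : (Matrix (Fin k) (Fin k) ℤ)ˣ)).val) :
    ∃ Q : Set ↥(Nk (k + 1)), IsPositiveCone Q ∧
      IsConvexIn Q ((ι.range : Subgroup ↥(Nk (k + 1))) : Set ↥(Nk (k + 1))) := by
  obtain ⟨P, hP⟩ := Nk.exists_isPositiveCone k
  rw [Nk.range_eq_lastRowKer hι]
  exact Nk.exists_isPositiveCone_isConvexIn_lastRowKer hP

/-- For the group homomorphism `ι : N_k → N_{k+1}` sending `B` to the block matrix
`(B 0; 0 1)`, there is a positive cone `Q` of `N_{k+1}` such that the image `ι(N_k)` is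
convex with respect to `Q`. -/
theorem image_Nk_convex_in_Nk_succ (k : ℕ) (hk : 1 ≤ k)
    (ι : ↥(Nk k) →* ↥(Nk (k + 1)))
    (hι : ∀ B : ↥(Nk k), ((ι B : ↥(Nk (k + 1))) : (Matrix (Fin (k + 1)) (Fin (k + 1)) ℤ)ˣ).val
      = embMat k ((B : (Matrix (Fin k) (Fin k) ℤ)ˣ)).val)
    (hinj : Function.Injective ι) :
    ∃ Q : Set ↥(Nk (k + 1)), IsPositiveCone Q ∧
      IsConvexIn Q ((ι.range : Subgroup ↥(Nk (k + 1))) : Set ↥(Nk (k + 1))) :=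
  image_Nk_convex_in_Nk_succ_general k ι hι
end
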